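/- arXiv:2112.03431 — 8 statements merged into one kernel-verified Lean document; each statement's English description precedes it below -/
import Mathlib

section
/- Weak regularity estimate for v: if in addition u(t,x) ≥ 0 for all (t,x) ∈ [0,T] × [a,b], then for every t ∈ [0,T] the function t ↦ ∫ₐᵇ v(t,x)² dx is differentiable and satisfies (d/dt) ∫ₐᵇ v(t,x)² dx + ∫ₐᵇ (∂ₓv(t,x))² dx ≤ 0. -/
open MeasureTheory intervalIntegral Metric ContDiff

/-- Weak regularity estimate for v: if u ≥ 0, then t ↦ ∫ₐᵇ v(t,x)² dx is
differentiable and (d/dt) ∫ₐᵇ v² dx + ∫ₐᵇ (∂ₓv)² dx ≤ 0. -/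
theorem weak_regularity_v
    (a b T χ μ : ℝ) (hab : a < b) (hT : 0 < T) (hχ : 0 < χ) (hμ : 0 < μ)
    (u v : ℝ → ℝ → ℝ)
    (hu : ContDiff ℝ (⊤ : ℕ∞) (fun p : ℝ × ℝ => u p.1 p.2))
    (hv : ContDiff ℝ (⊤ : ℕ∞) (fun p : ℝ × ℝ => v p.1 p.2))
    (hpde_u : ∀ t ∈ Set.Icc (0:ℝ) T, ∀ x ∈ Set.Icc a b,
      deriv (fun s => u s x) t
        = deriv (deriv (u t)) x - χ * deriv (fun y => u t y * deriv (v t) y) x)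
    (hpde_v : ∀ t ∈ Set.Icc (0:ℝ) T, ∀ x ∈ Set.Icc a b,
      deriv (fun s => v s x) t
        = deriv (deriv (v t)) x - μ * u t x * v t x)
    (hbc_u : ∀ t ∈ Set.Icc (0:ℝ) T, deriv (u t) a = 0 ∧ deriv (u t) b = 0)
    (hbc_v : ∀ t ∈ Set.Icc (0:ℝ) T, deriv (v t) a = 0 ∧ deriv (v t) b = 0)
    (hupos : ∀ t ∈ Set.Icc (0:ℝ) T, ∀ x ∈ Set.Icc a b, 0 ≤ u t x) :
    ∀ t ∈ Set.Icc (0:ℝ) T, ∃ D : ℝ,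
      HasDerivAt (fun s => ∫ x in a..b, (v s x)^2) D t ∧
      D + (∫ x in a..b, (deriv (v t) x)^2) ≤ 0 := by
  intro t ht
  have hv' : ContDiff ℝ ∞ (fun p : ℝ × ℝ => v p.1 p.2) := hv.of_le (by simp)
  set V : ℝ × ℝ → ℝ := fun p => v p.1 p.2 with hV
  -- partial time derivative
  set P : ℝ × ℝ → ℝ := fun p => fderiv ℝ V p (1, 0) with hP
  have hPcont : Continuous P := (hv'.continuous_fderiv (by simp)).clm_apply continuous_const
  have hPd : ∀ s x : ℝ, HasDerivAt (fun r => v r x) (P (s, x)) s := by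
    intro s x
    have h1 : HasFDerivAt V (fderiv ℝ V (s, x)) (s, x) :=
      (hv'.differentiable (by simp) (s, x)).hasFDerivAt
    have h2 : HasDerivAt (fun r : ℝ => (r, x)) ((1 : ℝ), (0 : ℝ)) s :=
      (hasDerivAt_id s).prodMk (hasDerivAt_const s x)
    exact h1.comp_hasDerivAt s h2
  -- smoothness in x for fixed time
  have hvx : ∀ s : ℝ, ContDiff ℝ ∞ (v s) := by
    intro s
    exact hv'.comp ((contDiff_const (c := s)).prodMk contDiff_id)
  have hvc : ∀ s : ℝ, Continuous (v s) := fun s => (hvx s).continuous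
  have hvx' : ∀ s : ℝ, ContDiff ℝ ∞ (deriv (v s)) := fun s =>
    ((contDiff_infty_iff_deriv).1 (hvx s)).2
  -- derivative of s ↦ ∫ v²
  obtain ⟨C, hC⟩ : ∃ C : ℝ, ∀ p ∈ Set.Icc t (t+1) ×ˢ Set.uIcc a b ∪
      Set.Icc (t-1) t ×ˢ Set.uIcc a b, |2 * V p * P p| ≤ C := by
    have hcp : IsCompact (Set.Icc t (t+1) ×ˢ Set.uIcc a b ∪
        Set.Icc (t-1) t ×ˢ Set.uIcc a b) :=
      ((isCompact_Icc.prod isCompact_uIcc).union (isCompact_Icc.prod isCompact_uIcc))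
    have hco : Continuous fun p : ℝ × ℝ => |2 * V p * P p| :=
      ((continuous_const.mul (hv'.continuous)).mul hPcont).abs
    obtain ⟨C, hC⟩ := hcp.exists_bound_of_continuousOn hco.continuousOn
    exact ⟨C, fun p hp => by simpa using hC p hp⟩
  have key := intervalIntegral.hasDerivAt_integral_of_dominated_loc_of_deriv_le
      (F := fun s x => (v s x)^2) (F' := fun s x => 2 * v s x * P (s, x))
      (x₀ := t) (a := a) (b := b) (μ := volume) (bound := fun _ => C)
      (s := Metric.ball t 1) (Metric.ball_mem_nhds t one_pos)
      (Filter.Eventually.of_forall fun s =>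
        (Continuous.aestronglyMeasurable ((hvc s).pow 2)))
      (Continuous.intervalIntegrable ((hvc t).pow 2) a b)
      (Continuous.aestronglyMeasurable ((continuous_const.mul (hvc t)).mul (hPcont.comp (Continuous.prodMk_right t))))
      (Filter.Eventually.of_forall (fun x hx s hs => by
        have hx' : x ∈ Set.uIcc a b := Set.uIoc_subset_uIcc hx
        have hs' : s ∈ Set.Icc t (t+1) ∪ Set.Icc (t-1) t := by
          rcases le_total t s with h | h
          · exact Or.inl ⟨h, by have := abs_lt.1 (by simpa [Real.dist_eq] using hs); linarith [this.1, this.2]⟩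
          · exact Or.inr ⟨by have := abs_lt.1 (by simpa [Real.dist_eq] using hs); linarith [this.1, this.2], h⟩
        rcases hs' with h | h
        · have := hC (s, x) (Or.inl ⟨h, hx'⟩)
          simpa only [Real.norm_eq_abs] using this
        · have := hC (s, x) (Or.inr ⟨h, hx'⟩)
          simpa only [Real.norm_eq_abs] using this))
      (Continuous.intervalIntegrable continuous_const a b)
      (Filter.Eventually.of_forall (fun x _ s _ => by
        have := (hPd s x).const_mul (2 : ℝ)
        have h1 : HasDerivAt (fun r => v r x) (P (s, x)) s := hPd s x
        simpa [pow_two, mul_assoc] using ((h1.mul h1).const_mul 1).congr_deriv (by ring)))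
  refine ⟨_, key.2, ?_⟩
  have hIcc : Set.uIcc a b = Set.Icc a b := Set.uIcc_of_le hab.le
  have h1le : (1 : WithTop ℕ∞) ≤ ∞ := by exact_mod_cast le_top
  have hdvt : Differentiable ℝ (v t) := (hvx t).differentiable (by simp)
  have hdvt' : Differentiable ℝ (deriv (v t)) := (hvx' t).differentiable (by simp)
  have hcvt' : Continuous (deriv (v t)) := hdvt'.continuous
  have hcvt'' : Continuous (deriv (deriv (v t))) := (hvx' t).continuous_deriv h1le
  have hcu : Continuous (u t) :=
    (hu.comp ((contDiff_const (c := t)).prodMk contDiff_id)).continuous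
  -- rewrite integrand using the PDE
  have hEq : ∀ x ∈ Set.uIcc a b,
      2 * v t x * P (t, x)
        = 2 * (v t x * deriv (deriv (v t)) x) - 2 * μ * (u t x * (v t x)^2) := by
    intro x hx
    rw [hIcc] at hx
    have h1 : P (t, x) = deriv (fun s => v s x) t := ((hPd t x).deriv).symm
    rw [h1, hpde_v t ht x hx]
    ring
  have hInt1 : IntervalIntegrable (fun x => v t x * deriv (deriv (v t)) x) volume a b :=
    (((hvc t).mul hcvt'')).intervalIntegrable a b
  have hInt2 : IntervalIntegrable (fun x => u t x * (v t x)^2) volume a b :=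
    ((hcu.mul ((hvc t).pow 2))).intervalIntegrable a b
  have hD : (∫ x in a..b, 2 * v t x * P (t, x))
      = 2 * (∫ x in a..b, v t x * deriv (deriv (v t)) x)
        - 2 * μ * (∫ x in a..b, u t x * (v t x)^2) := by
    rw [intervalIntegral.integral_congr hEq,
      intervalIntegral.integral_sub ((hInt1.const_mul 2)) ((hInt2.const_mul (2*μ))),
      intervalIntegral.integral_const_mul, intervalIntegral.integral_const_mul]
  -- integration by parts
  have hibp : (∫ x in a..b, v t x * deriv (deriv (v t)) x)
      = - ∫ x in a..b, (deriv (v t) x)^2 := by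
    have := intervalIntegral.integral_mul_deriv_eq_deriv_mul
      (u := v t) (v := deriv (v t)) (u' := deriv (v t)) (v' := deriv (deriv (v t)))
      (a := a) (b := b)
      (fun x _ => (hdvt x).hasDerivAt)
      (fun x _ => (hdvt' x).hasDerivAt)
      (hcvt'.intervalIntegrable a b)
      (hcvt''.intervalIntegrable a b)
    rw [(hbc_v t ht).1, (hbc_v t ht).2] at this
    rw [this]
    simp [pow_two]
  have hnn1 : 0 ≤ ∫ x in a..b, (deriv (v t) x)^2 :=
    intervalIntegral.integral_nonneg hab.le (fun x _ => sq_nonneg _)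
  have hnn2 : 0 ≤ ∫ x in a..b, u t x * (v t x)^2 :=
    intervalIntegral.integral_nonneg hab.le
      (fun x hx => mul_nonneg (hupos t ht x hx) (sq_nonneg _))
  rw [hD, hibp]
  nlinarith [mul_nonneg hμ.le hnn2]
end

section
/- Exponential lower bound for v: if in addition there is a constant K ≥ 0 with 0 ≤ u(t,x) ≤ K for all (t,x) ∈ [0,T] × [a,b], and a constant m > 0 with v(0,x) ≥ m for all x ∈ [a,b], then v(t,x) ≥ m·exp(−μ K t) for all (t,x) ∈ [0,T] × [a,b]; in particular v stays strictly positive. -/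
open MeasureTheory


section AuxLemmas
open Set Filter

/-- On the right side of a point where `g` vanishes and has negative derivative,
`g` is eventually negative. -/
lemma neg_right_of_deriv_neg {g : ℝ → ℝ} {x₀ : ℝ} (hg : DifferentiableAt ℝ g x₀)
    (h0 : g x₀ = 0) (hneg : deriv g x₀ < 0) :
    ∀ᶠ x in nhdsWithin x₀ (Ioi x₀), g x < 0 := by
  have hs : Tendsto (slope g x₀) (nhdsWithin x₀ {x₀}ᶜ) (nhds (deriv g x₀)) :=
    hasDerivAt_iff_tendsto_slope.mp hg.hasDerivAt
  have hs' : Tendsto (slope g x₀) (nhdsWithin x₀ (Ioi x₀)) (nhds (deriv g x₀)) :=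
    hs.mono_left (nhdsWithin_mono _ (by intro y hy; exact ne_of_gt hy))
  have hev : ∀ᶠ x in nhdsWithin x₀ (Ioi x₀), slope g x₀ x < 0 :=
    hs'.eventually_lt_const hneg
  filter_upwards [hev, self_mem_nhdsWithin] with x hx hx'
  have hx'' : (0:ℝ) < x - x₀ := sub_pos.mpr hx'
  rw [slope_def_field, h0] at hx
  have := div_neg_iff.mp (by simpa [div_eq_iff] using hx)
  rcases this with ⟨h1, h2⟩ | ⟨h1, h2⟩
  · linarith
  · linarith

lemma pos_left_of_deriv_neg {g : ℝ → ℝ} {x₀ : ℝ} (hg : DifferentiableAt ℝ g x₀)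
    (h0 : g x₀ = 0) (hneg : deriv g x₀ < 0) :
    ∀ᶠ x in nhdsWithin x₀ (Iio x₀), 0 < g x := by
  have hs : Tendsto (slope g x₀) (nhdsWithin x₀ {x₀}ᶜ) (nhds (deriv g x₀)) :=
    hasDerivAt_iff_tendsto_slope.mp hg.hasDerivAt
  have hs' : Tendsto (slope g x₀) (nhdsWithin x₀ (Iio x₀)) (nhds (deriv g x₀)) :=
    hs.mono_left (nhdsWithin_mono _ (by intro y hy; exact ne_of_lt hy))
  have hev : ∀ᶠ x in nhdsWithin x₀ (Iio x₀), slope g x₀ x < 0 :=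
    hs'.eventually_lt_const hneg
  filter_upwards [hev, self_mem_nhdsWithin] with x hx hx'
  have hx'' : x - x₀ < 0 := sub_neg.mpr hx'
  rw [slope_def_field, h0] at hx
  have := div_neg_iff.mp (by simpa using hx)
  rcases this with ⟨h1, h2⟩ | ⟨h1, h2⟩
  · linarith
  · linarith
/-- Second derivative is nonneg at a minimum over `Icc a b` where the first
derivative vanishes. -/
lemma second_deriv_nonneg_at_min {a b x₀ : ℝ} {f : ℝ → ℝ} (hf : ContDiff ℝ (⊤ : ℕ∞) f)
    (hab : a < b) (hx₀ : x₀ ∈ Icc a b) (hmin : ∀ x ∈ Icc a b, f x₀ ≤ f x)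
    (hd : deriv f x₀ = 0) : 0 ≤ deriv (deriv f) x₀ := by
  by_contra hcon
  push_neg at hcon
  have hf2 : ContDiff ℝ ((⊤:ℕ∞):WithTop ℕ∞) f := hf.of_le (by simp)
  have hf' : ContDiff ℝ ((⊤:ℕ∞):WithTop ℕ∞) (deriv f) := (contDiff_infty_iff_deriv.mp hf2).2
  have hdiff : Differentiable ℝ f := hf2.differentiable (by simp)
  have hdiff' : Differentiable ℝ (deriv f) := hf'.differentiable (by simp)
  rcases lt_or_eq_of_le hx₀.2 with hlt | heq
  · -- x₀ < b : deriv f < 0 on a right interval, f strictly decreasing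
    have hev := neg_right_of_deriv_neg (hdiff' x₀) hd hcon
    rcases mem_nhdsGT_iff_exists_Ioo_subset.mp hev with ⟨c, hc, hsub⟩
    set y := min c b with hy
    have hx₀y : x₀ < y := lt_min hc hlt
    have hanti : StrictAntiOn f (Icc x₀ y) := by
      apply strictAntiOn_of_deriv_neg (convex_Icc _ _) (hdiff.continuous.continuousOn)
      intro z hz
      rw [interior_Icc] at hz
      exact hsub ⟨hz.1, lt_of_lt_of_le hz.2 (min_le_left _ _)⟩
    have h1 : f y < f x₀ := hanti ⟨le_refl _, le_of_lt hx₀y⟩ ⟨le_of_lt hx₀y, le_refl _⟩ hx₀y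
    have h2 : f x₀ ≤ f y := hmin y ⟨le_trans hx₀.1 (le_of_lt hx₀y), min_le_right _ _⟩
    linarith
  · -- x₀ = b : deriv f > 0 on a left interval, f strictly increasing
    have hax₀ : a < x₀ := heq ▸ hab
    have hev := pos_left_of_deriv_neg (hdiff' x₀) hd hcon
    rcases mem_nhdsLT_iff_exists_Ioo_subset.mp hev with ⟨c, hc, hsub⟩
    set y := max c a with hy
    have hx₀y : y < x₀ := max_lt hc hax₀
    have hmono : StrictMonoOn f (Icc y x₀) := by
      apply strictMonoOn_of_deriv_pos (convex_Icc _ _) (hdiff.continuous.continuousOn)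
      intro z hz
      rw [interior_Icc] at hz
      exact hsub ⟨lt_of_le_of_lt (le_max_left _ _) hz.1, hz.2⟩
    have h1 : f y < f x₀ := hmono ⟨le_refl _, le_of_lt hx₀y⟩ ⟨le_of_lt hx₀y, le_refl _⟩ hx₀y
    have h2 : f x₀ ≤ f y := hmin y ⟨max_le_iff.mp (le_refl y) |>.2, le_trans (le_of_lt hx₀y) hx₀.2⟩
    linarith

/-- At a point which minimizes over `[0,t₀]` (right endpoint), derivative ≤ 0. -/
lemma deriv_nonpos_right_min {h : ℝ → ℝ} {t₀ : ℝ} (ht₀ : 0 < t₀)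
    (hdiff : DifferentiableAt ℝ h t₀) (hmin : ∀ t ∈ Icc (0:ℝ) t₀, h t₀ ≤ h t) :
    deriv h t₀ ≤ 0 := by
  have hs : Tendsto (slope h t₀) (nhdsWithin t₀ {t₀}ᶜ) (nhds (deriv h t₀)) :=
    hasDerivAt_iff_tendsto_slope.mp hdiff.hasDerivAt
  have hs' : Tendsto (slope h t₀) (nhdsWithin t₀ (Iio t₀)) (nhds (deriv h t₀)) :=
    hs.mono_left (nhdsWithin_mono _ (fun y hy => ne_of_lt hy))
  refine le_of_tendsto hs' ?_
  have hIoo : Ioo (0:ℝ) t₀ ∈ nhdsWithin t₀ (Iio t₀) :=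
    Ioo_mem_nhdsLT_of_mem ⟨ht₀, le_refl _⟩
  filter_upwards [hIoo] with t ht
  rw [slope_def_field]
  apply div_nonpos_of_nonneg_of_nonpos
  · have := hmin t ⟨le_of_lt ht.1, le_of_lt ht.2⟩; linarith
  · linarith [ht.2]
end AuxLemmas

/-- Exponential lower bound for v: if 0 ≤ u ≤ K and v(0,·) ≥ m > 0, then
v(t,x) ≥ m·exp(−μKt); in particular v stays strictly positive. -/
theorem exponential_lower_bound_v
    (a b T χ μ : ℝ) (hab : a < b) (hT : 0 < T) (hχ : 0 < χ) (hμ : 0 < μ)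
    (u v : ℝ → ℝ → ℝ)
    (hu : ContDiff ℝ (⊤ : ℕ∞) (fun p : ℝ × ℝ => u p.1 p.2))
    (hv : ContDiff ℝ (⊤ : ℕ∞) (fun p : ℝ × ℝ => v p.1 p.2))
    (hpde_u : ∀ t ∈ Set.Icc (0:ℝ) T, ∀ x ∈ Set.Icc a b,
      deriv (fun s => u s x) t
        = deriv (deriv (u t)) x - χ * deriv (fun y => u t y * deriv (v t) y) x)
    (hpde_v : ∀ t ∈ Set.Icc (0:ℝ) T, ∀ x ∈ Set.Icc a b,
      deriv (fun s => v s x) t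
        = deriv (deriv (v t)) x - μ * u t x * v t x)
    (hbc_u : ∀ t ∈ Set.Icc (0:ℝ) T, deriv (u t) a = 0 ∧ deriv (u t) b = 0)
    (hbc_v : ∀ t ∈ Set.Icc (0:ℝ) T, deriv (v t) a = 0 ∧ deriv (v t) b = 0)
    (K : ℝ) (hK : 0 ≤ K)
    (hubound : ∀ t ∈ Set.Icc (0:ℝ) T, ∀ x ∈ Set.Icc a b, 0 ≤ u t x ∧ u t x ≤ K)
    (m : ℝ) (hm : 0 < m)
    (hv0 : ∀ x ∈ Set.Icc a b, m ≤ v 0 x) :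
    ∀ t ∈ Set.Icc (0:ℝ) T, ∀ x ∈ Set.Icc a b,
      m * Real.exp (-(μ * K * t)) ≤ v t x := by
  -- slice smoothness
  have hvT : ∀ t : ℝ, ContDiff ℝ (⊤ : ℕ∞) (v t) :=
    fun t => hv.comp (contDiff_const.prodMk contDiff_id)
  have hvX : ∀ x : ℝ, ContDiff ℝ (⊤ : ℕ∞) (fun s => v s x) :=
    fun x => hv.comp (contDiff_id.prodMk contDiff_const)
  -- the key perturbation claim
  have key : ∀ ε : ℝ, 0 < ε → ε * (1 + T) < m →
      ∀ t ∈ Set.Icc (0:ℝ) T, ∀ x ∈ Set.Icc a b,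
        0 < Real.exp (μ * K * t) * v t x - m + ε * (1 + t) := by
    intro ε hε hεm
    by_contra hcon
    push_neg at hcon
    obtain ⟨t₁, ht₁, x₁, hx₁, hZ₁⟩ := hcon
    set Z : ℝ × ℝ → ℝ :=
      fun p => Real.exp (μ * K * p.1) * v p.1 p.2 - m + ε * (1 + p.1) with hZdef
    have hZc : Continuous Z := by
      apply Continuous.add
      · exact ((Real.continuous_exp.comp (continuous_const.mul continuous_fst)).mul
          hv.continuous).sub continuous_const
      · exact continuous_const.mul (continuous_const.add continuous_fst)
    set S : Set (ℝ × ℝ) := (Set.Icc (0:ℝ) T ×ˢ Set.Icc a b) ∩ Z ⁻¹' (Set.Iic 0) with hSdef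
    have hScomp : IsCompact S :=
      (isCompact_Icc.prod isCompact_Icc).inter_right (isClosed_Iic.preimage hZc)
    have hSne : S.Nonempty := ⟨(t₁, x₁), ⟨⟨ht₁, hx₁⟩, hZ₁⟩⟩
    have hFcomp : IsCompact (Prod.fst '' S) := hScomp.image continuous_fst
    have hFne : (Prod.fst '' S).Nonempty := hSne.image _
    set t₀ := sInf (Prod.fst '' S) with ht₀def
    have ht₀F : t₀ ∈ Prod.fst '' S := hFcomp.sInf_mem hFne
    obtain ⟨p₀, hp₀S, hp₀1⟩ := ht₀F
    set x₀ := p₀.2 with hx₀def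
    have hpp : p₀ = (t₀, x₀) := Prod.ext hp₀1 rfl
    have ht₀T : t₀ ∈ Set.Icc (0:ℝ) T := hp₀1 ▸ hp₀S.1.1
    have hx₀ab : x₀ ∈ Set.Icc a b := hp₀S.1.2
    have hZ0 : Z (t₀, x₀) ≤ 0 := hpp ▸ hp₀S.2
    -- positivity before t₀
    have hpos_before : ∀ t, 0 ≤ t → t < t₀ → ∀ x ∈ Set.Icc a b, 0 < Z (t, x) := by
      intro t ht htl x hx
      by_contra hc
      push_neg at hc
      have hmem : (t, x) ∈ S := ⟨⟨⟨ht, le_trans htl.le ht₀T.2⟩, hx⟩, hc⟩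
      have : t ∈ Prod.fst '' S := ⟨(t, x), hmem, rfl⟩
      have := csInf_le hFcomp.bddBelow this
      linarith
    -- t₀ > 0
    have ht₀pos : 0 < t₀ := by
      rcases lt_or_eq_of_le ht₀T.1 with h | h
      · exact h
      · exfalso
        have h0 : Z (t₀, x₀) = v 0 x₀ - m + ε := by
          simp [hZdef, ← h, Real.exp_zero]
          try ring
        have := hv0 x₀ hx₀ab
        rw [h0] at hZ0
        linarith
    -- nonnegativity at time t₀
    have hZt₀ : ∀ x ∈ Set.Icc a b, 0 ≤ Z (t₀, x) := by
      intro x hx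
      have hcont : ContinuousWithinAt (fun t => Z (t, x)) (Set.Ico 0 t₀) t₀ :=
        (hZc.comp (continuous_id.prodMk continuous_const)).continuousWithinAt
      have hcl : t₀ ∈ closure (Set.Ico (0:ℝ) t₀) := by
        rw [closure_Ico (ne_of_lt ht₀pos)]
        exact ⟨ht₀pos.le, le_refl _⟩
      have hne : (nhdsWithin t₀ (Set.Ico (0:ℝ) t₀)).NeBot :=
        mem_closure_iff_nhdsWithin_neBot.mp hcl
      refine ge_of_tendsto hcont.tendsto ?_
      filter_upwards [self_mem_nhdsWithin] with t ht
      exact (hpos_before t ht.1 ht.2 x hx).le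
    have hZeq : Z (t₀, x₀) = 0 := le_antisymm hZ0 (hZt₀ x₀ hx₀ab)
    -- spatial analysis at (t₀, x₀)
    set e := Real.exp (μ * K * t₀) with hedef
    have he : 0 < e := Real.exp_pos _
    set f : ℝ → ℝ := fun x => e * v t₀ x + (ε * (1 + t₀) - m) with hfdef
    have hfZ : ∀ x, f x = Z (t₀, x) := by intro x; simp [hfdef, hZdef]; ring
    have hfmin : ∀ x ∈ Set.Icc a b, f x₀ ≤ f x := by
      intro x hx
      rw [hfZ, hfZ, hZeq]
      exact hZt₀ x hx
    have hfsmooth : ContDiff ℝ (⊤ : ℕ∞) f := (contDiff_const.mul (hvT t₀)).add contDiff_const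
    have hvt2 : ContDiff ℝ ((⊤:ℕ∞):WithTop ℕ∞) (v t₀) := (hvT t₀).of_le (by simp)
    have hvtdiff : Differentiable ℝ (v t₀) :=
      hvt2.differentiable (by simp)
    have hvt'diff : Differentiable ℝ (deriv (v t₀)) :=
      ((contDiff_infty_iff_deriv.mp hvt2).2).differentiable (by simp)
    have hder : deriv f = fun x => e * deriv (v t₀) x := by
      funext x
      exact (((hvtdiff x).hasDerivAt.const_mul e).add_const _).deriv
    have hd0 : deriv f x₀ = 0 := by
      rcases eq_or_lt_of_le hx₀ab.1 with h | h
      · rw [hder]; simp only []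
        rw [← h, (hbc_v t₀ ht₀T).1, mul_zero]
      · rcases eq_or_lt_of_le hx₀ab.2 with h2 | h2
        · rw [hder]; simp only []
          rw [h2, (hbc_v t₀ ht₀T).2, mul_zero]
        · have hnb : Set.Icc a b ∈ nhds x₀ := Icc_mem_nhds h h2
          have hlm : IsLocalMin f x₀ :=
            Filter.eventually_of_mem hnb (fun x hx => hfmin x hx)
          exact hlm.deriv_eq_zero
    have hsecond : 0 ≤ deriv (deriv f) x₀ :=
      second_deriv_nonneg_at_min hfsmooth hab hx₀ab hfmin hd0
    have hvxx : 0 ≤ deriv (deriv (v t₀)) x₀ := by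
      rw [hder] at hsecond
      rw [deriv_const_mul e (hvt'diff x₀)] at hsecond
      nlinarith
    -- temporal analysis at (t₀, x₀)
    set dv := deriv (fun s => v s x₀) t₀ with hdvdef
    have hvxdiff : Differentiable ℝ (fun s => v s x₀) :=
      ((hvX x₀).of_le (by simp)).differentiable (by simp : ((⊤:ℕ∞):WithTop ℕ∞) ≠ 0)
    have hE : HasDerivAt (fun s => Real.exp (μ * K * s)) (Real.exp (μ * K * t₀) * (μ * K * 1)) t₀ :=
      ((hasDerivAt_id t₀).const_mul (μ * K)).exp
    have hVd : HasDerivAt (fun s => v s x₀) dv t₀ := (hvxdiff t₀).hasDerivAt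
    have hlin : HasDerivAt (fun s : ℝ => ε * (1 + s)) (ε * 1) t₀ :=
      ((hasDerivAt_id t₀).const_add 1).const_mul ε
    have hh : HasDerivAt (fun s => Z (s, x₀))
        (e * (μ * K) * v t₀ x₀ + e * dv + ε) t₀ := by
      have := ((hE.mul hVd).sub_const m).add hlin
      refine this.congr_deriv ?_
      · simp [hedef]
        try ring
    have hhmin : ∀ t ∈ Set.Icc (0:ℝ) t₀, (fun s => Z (s, x₀)) t₀ ≤ (fun s => Z (s, x₀)) t := by
      intro t ht
      simp only []
      rw [hZeq]
      rcases lt_or_eq_of_le ht.2 with h | h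
      · exact (hpos_before t ht.1 h x₀ hx₀ab).le
      · rw [h]; exact le_of_eq hZeq.symm
    have hdnp : deriv (fun s => Z (s, x₀)) t₀ ≤ 0 :=
      deriv_nonpos_right_min ht₀pos hh.differentiableAt hhmin
    rw [hh.deriv] at hdnp
    -- use the PDE
    have hpde := hpde_v t₀ ht₀T x₀ hx₀ab
    rw [← hdvdef] at hpde
    -- v t₀ x₀ > 0 from Z = 0
    have hev : e * v t₀ x₀ = m - ε * (1 + t₀) := by
      have := hZeq
      simp [hZdef, ← hedef] at this
      try linarith
    have hεt₀ : ε * (1 + t₀) ≤ ε * (1 + T) := by nlinarith [ht₀T.2]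
    have hv₀pos : 0 < v t₀ x₀ := by nlinarith
    have hu₀ := hubound t₀ ht₀T x₀ hx₀ab
    -- final contradiction
    nlinarith [mul_nonneg he.le hvxx, mul_pos he hv₀pos,
      mul_nonneg (mul_nonneg (mul_pos he hμ).le (sub_nonneg.mpr hu₀.2)) hv₀pos.le]
  -- conclude from the key claim
  intro t ht x hx
  have hmain : m ≤ Real.exp (μ * K * t) * v t x := by
    by_contra hlt
    push_neg at hlt
    set E := Real.exp (μ * K * t) with hEdef
    set d := min (m - E * v t x) m with hddef
    have hd : 0 < d := lt_min (by linarith) hm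
    set ε := d / (2 * (1 + T)) with hεdef
    have h1T : (0:ℝ) < 1 + T := by linarith
    have hε : 0 < ε := div_pos hd (by linarith)
    have hεm : ε * (1 + T) < m := by
      rw [hεdef]
      rw [div_mul_eq_mul_div, mul_comm]
      rw [div_lt_iff₀ (by linarith)]
      have : d ≤ m := min_le_right _ _
      nlinarith
    have := key ε hε hεm t ht x hx
    have hεt : ε * (1 + t) ≤ ε * (1 + T) := by nlinarith [ht.2]
    have hdle : d ≤ m - E * v t x := min_le_left _ _
    have : ε * (1 + T) = d / 2 := by rw [hεdef]; field_simp
    nlinarith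
  have hexp : Real.exp (-(μ * K * t)) * Real.exp (μ * K * t) = 1 := by
    rw [← Real.exp_add]; simp
  have h2 : Real.exp (-(μ * K * t)) * (Real.exp (μ * K * t) * v t x) = v t x := by
    rw [← mul_assoc, hexp, one_mul]
  have h3 := mul_le_mul_of_nonneg_left hmain (Real.exp_pos (-(μ * K * t))).le
  rw [h2] at h3
  linarith
end

section
/- Estimate of a singular functional: if in addition u(t,x) > 0 for all (t,x) ∈ [0,T] × [a,b], then for every t ∈ [0,T], (d/dt) ∫ₐᵇ (−log u(t,x)) dx + (1/2) ∫ₐᵇ (∂ₓu(t,x))² / u(t,x)² dx ≤ (χ²/2) ∫ₐᵇ (∂ₓv(t,x))² dx. -/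
open MeasureTheory Metric Set

/-- Estimate of a singular functional: if u > 0 everywhere, then
(d/dt) ∫ₐᵇ (−log u) dx + (1/2) ∫ₐᵇ (∂ₓu)²/u² dx ≤ (χ²/2) ∫ₐᵇ (∂ₓv)² dx. -/
theorem singular_functional_estimate
    (a b T χ μ : ℝ) (hab : a < b) (hT : 0 < T) (hχ : 0 < χ) (hμ : 0 < μ)
    (u v : ℝ → ℝ → ℝ)
    (hu : ContDiff ℝ (⊤ : ℕ∞) (fun p : ℝ × ℝ => u p.1 p.2))
    (hv : ContDiff ℝ (⊤ : ℕ∞) (fun p : ℝ × ℝ => v p.1 p.2))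
    (hpde_u : ∀ t ∈ Set.Icc (0:ℝ) T, ∀ x ∈ Set.Icc a b,
      deriv (fun s => u s x) t
        = deriv (deriv (u t)) x - χ * deriv (fun y => u t y * deriv (v t) y) x)
    (hpde_v : ∀ t ∈ Set.Icc (0:ℝ) T, ∀ x ∈ Set.Icc a b,
      deriv (fun s => v s x) t
        = deriv (deriv (v t)) x - μ * u t x * v t x)
    (hbc_u : ∀ t ∈ Set.Icc (0:ℝ) T, deriv (u t) a = 0 ∧ deriv (u t) b = 0)
    (hbc_v : ∀ t ∈ Set.Icc (0:ℝ) T, deriv (v t) a = 0 ∧ deriv (v t) b = 0)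
    (hupos : ∀ t ∈ Set.Icc (0:ℝ) T, ∀ x ∈ Set.Icc a b, 0 < u t x) :
    ∀ t ∈ Set.Icc (0:ℝ) T, ∃ D : ℝ,
      HasDerivAt (fun s => ∫ x in a..b, -Real.log (u s x)) D t ∧
      D + (1/2) * (∫ x in a..b, (deriv (u t) x)^2 / (u t x)^2)
        ≤ (χ^2/2) * ∫ x in a..b, (deriv (v t) x)^2 := by
  intro t ht
  have hUc : Continuous (fun p : ℝ × ℝ => u p.1 p.2) := hu.continuous
  -- smoothness of slices
  have hcurve : ∀ s : ℝ, ContDiff ℝ (⊤ : ℕ∞) (fun x : ℝ => ((s, x) : ℝ × ℝ)) :=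
    fun s => contDiff_const.prodMk contDiff_id
  have hut : ContDiff ℝ (⊤ : ℕ∞) (u t) := hu.comp (hcurve t)
  have hvt : ContDiff ℝ (⊤ : ℕ∞) (v t) := hv.comp (hcurve t)
  have hone : (1 : WithTop ℕ∞) ≤ ((⊤ : ℕ∞) : WithTop ℕ∞) := by exact_mod_cast le_top
  have hut' : ContDiff ℝ (⊤ : ℕ∞) (u t) := hut.of_le (by simp)
  have hvt' : ContDiff ℝ (⊤ : ℕ∞) (v t) := hvt.of_le (by simp)
  have hux_cd : ContDiff ℝ (⊤ : ℕ∞) (deriv (u t)) := (contDiff_infty_iff_deriv.mp hut').2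
  have hvx_cd : ContDiff ℝ (⊤ : ℕ∞) (deriv (v t)) := (contDiff_infty_iff_deriv.mp hvt').2
  set g : ℝ → ℝ := fun y => u t y * deriv (v t) y with hgdef
  have hg_cd : ContDiff ℝ (⊤ : ℕ∞) g := hut'.mul hvx_cd
  have hcont_u : Continuous (u t) := hut.continuous
  have hcont_ux : Continuous (deriv (u t)) := hux_cd.continuous
  have hcont_uxx : Continuous (deriv (deriv (u t))) := hux_cd.continuous_deriv hone
  have hcont_vx : Continuous (deriv (v t)) := hvx_cd.continuous
  have hcont_g : Continuous g := hg_cd.continuous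
  have hcont_gx : Continuous (deriv g) := hg_cd.continuous_deriv hone
  -- time derivative
  have hdiffU : Differentiable ℝ (fun p : ℝ × ℝ => u p.1 p.2) := hu.differentiable (by simp)
  set ut : ℝ → ℝ → ℝ := fun s x => fderiv ℝ (fun p : ℝ × ℝ => u p.1 p.2) (s, x) (1, 0)
    with hutdef
  have hUt : ∀ s x : ℝ, HasDerivAt (fun r => u r x) (ut s x) s := by
    intro s x
    have hline : HasDerivAt (fun r : ℝ => ((r, x) : ℝ × ℝ)) ((1 : ℝ), (0 : ℝ)) s :=
      (hasDerivAt_id s).prodMk (hasDerivAt_const s x)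
    exact (hdiffU (s, x)).hasFDerivAt.comp_hasDerivAt s hline
  have hutc : Continuous (fun p : ℝ × ℝ => ut p.1 p.2) := by
    have h1 : Continuous (fderiv ℝ (fun p : ℝ × ℝ => u p.1 p.2)) :=
      hu.continuous_fderiv (by simp)
    exact h1.clm_apply continuous_const
  -- positivity tube
  have hopen : IsOpen {p : ℝ × ℝ | 0 < u p.1 p.2} := isOpen_lt continuous_const hUc
  have hsub : (({t} : Set ℝ) ×ˢ Icc a b) ⊆ {p : ℝ × ℝ | 0 < u p.1 p.2} := by
    rintro ⟨s, x⟩ ⟨hs, hx⟩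
    simp only [mem_singleton_iff] at hs
    simp only [mem_setOf_eq]
    rw [hs]
    exact hupos t ht x hx
  obtain ⟨W1, W2, hW1o, _, htW1, habW2, hWsub⟩ :=
    generalized_tube_lemma isCompact_singleton isCompact_Icc hopen hsub
  obtain ⟨ε', hε', hballW⟩ := Metric.isOpen_iff.mp hW1o t (htW1 rfl)
  set ε : ℝ := ε' / 2 with hεdef
  have hε : 0 < ε := by positivity
  have hIccball : Icc (t - ε) (t + ε) ⊆ ball t ε' := by
    intro s hs
    rw [mem_Icc] at hs
    rw [mem_ball, Real.dist_eq]
    rw [abs_lt]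
    constructor <;> [linarith; linarith]
  have hpos' : ∀ s ∈ Icc (t - ε) (t + ε), ∀ x ∈ Icc a b, 0 < u s x := by
    intro s hs x hx
    exact hWsub (Set.mk_mem_prod (hballW (hIccball hs)) (habW2 hx))
  -- compact bounds
  set K : Set (ℝ × ℝ) := Icc (t - ε) (t + ε) ×ˢ Icc a b with hKdef
  have hK : IsCompact K := isCompact_Icc.prod isCompact_Icc
  have hKne : K.Nonempty := ⟨(t, a), ⟨⟨by linarith, by linarith⟩, ⟨le_refl a, hab.le⟩⟩⟩
  obtain ⟨pc, hpc, hcmin⟩ := hK.exists_isMinOn hKne hUc.continuousOn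
  set c : ℝ := u pc.1 pc.2 with hcdef
  have hcpos : 0 < c := hpos' pc.1 hpc.1 pc.2 hpc.2
  obtain ⟨pM, _, hMmax⟩ := hK.exists_isMaxOn hKne
    (continuous_abs.comp hutc).continuousOn
  set M : ℝ := |ut pM.1 pM.2| with hMdef
  have hball_sub : ball t ε ⊆ Icc (t - ε) (t + ε) := by
    intro s hs
    rw [mem_ball, Real.dist_eq, abs_lt] at hs
    exact ⟨by linarith [hs.1], by linarith [hs.2]⟩
  have hIoc_sub : Set.uIoc a b ⊆ Icc a b := by
    rw [Set.uIoc_of_le hab.le]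
    exact Ioc_subset_Icc_self
  have huIcc : Set.uIcc a b = Icc a b := Set.uIcc_of_le hab.le
  have hune : ∀ x ∈ Set.uIcc a b, u t x ≠ 0 := by
    intro x hx
    rw [huIcc] at hx
    exact (hupos t ht x hx).ne'
  -- differentiation under the integral sign
  have key := intervalIntegral.hasDerivAt_integral_of_dominated_loc_of_deriv_le
    (μ := volume) (F := fun s x => -Real.log (u s x))
    (F' := fun s x => -(ut s x / u s x)) (bound := fun _ => M / c) (a := a) (b := b)
    (x₀ := t) (Metric.ball_mem_nhds t hε) ?_ ?_ ?_ ?_ ?_ ?_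
  · refine ⟨∫ x in a..b, -(ut t x / u t x), key.2, ?_⟩
    -- names for the relevant x-functions
    set ux := deriv (u t) with huxdef
    set uxx := deriv (deriv (u t)) with huxxdef
    set vx := deriv (v t) with hvxdef
    set gx := deriv g with hgxdef
    have hx_pos : ∀ x ∈ Icc a b, 0 < u t x := hupos t ht
    have hune' : ∀ x ∈ Icc a b, u t x ≠ 0 := fun x hx => (hx_pos x hx).ne'
    have hdu : ∀ x : ℝ, HasDerivAt (u t) (ux x) x :=
      fun x => (hut'.differentiable (by simp) x).hasDerivAt
    have hduxx : ∀ x : ℝ, HasDerivAt ux (uxx x) x :=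
      fun x => (hux_cd.differentiable (by simp) x).hasDerivAt
    have hdg : ∀ x : ℝ, HasDerivAt g (gx x) x :=
      fun x => (hg_cd.differentiable (by simp) x).hasDerivAt
    -- integrability facts
    have i_uxxu : IntervalIntegrable (fun x => uxx x / u t x) volume a b := by
      apply ContinuousOn.intervalIntegrable
      rw [huIcc]
      exact hcont_uxx.continuousOn.div hcont_u.continuousOn hune'
    have i_ratio : IntervalIntegrable (fun x => (ux x)^2 / (u t x)^2) volume a b := by
      apply ContinuousOn.intervalIntegrable
      rw [huIcc]
      exact ((hcont_ux.pow 2).continuousOn).div ((hcont_u.pow 2).continuousOn)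
        (fun x hx => pow_ne_zero 2 (hune' x hx))
    have i_gxu : IntervalIntegrable (fun x => gx x / u t x) volume a b := by
      apply ContinuousOn.intervalIntegrable
      rw [huIcc]
      exact hcont_gx.continuousOn.div hcont_u.continuousOn hune'
    have i_guxu2 : IntervalIntegrable (fun x => g x * ux x / (u t x)^2) volume a b := by
      apply ContinuousOn.intervalIntegrable
      rw [huIcc]
      exact ((hcont_g.mul hcont_ux).continuousOn).div ((hcont_u.pow 2).continuousOn)
        (fun x hx => pow_ne_zero 2 (hune' x hx))
    have i_vx2 : IntervalIntegrable (fun x => (vx x)^2) volume a b :=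
      (hcont_vx.pow 2).intervalIntegrable a b
    -- integration by parts, step 1
    have hIBP1 : (∫ x in a..b, (uxx x / u t x - (ux x)^2 / (u t x)^2)) = 0 := by
      have hφ : ∀ x ∈ Set.uIcc a b, HasDerivAt (fun y => ux y / u t y)
          ((uxx x * u t x - ux x * ux x) / (u t x)^2) x := by
        intro x hx
        exact (hduxx x).div (hdu x) (hune x hx)
      have hint : IntervalIntegrable (fun x => (uxx x * u t x - ux x * ux x) / (u t x)^2)
          volume a b := by
        apply ContinuousOn.intervalIntegrable
        rw [huIcc]
        exact (((hcont_uxx.mul hcont_u).sub (hcont_ux.mul hcont_ux)).continuousOn).div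
          ((hcont_u.pow 2).continuousOn) (fun x hx => pow_ne_zero 2 (hune' x hx))
      have h0 : (∫ x in a..b, (uxx x * u t x - ux x * ux x) / (u t x)^2) = 0 := by
        rw [intervalIntegral.integral_eq_sub_of_hasDerivAt hφ hint]
        obtain ⟨ha0, hb0⟩ := hbc_u t ht
        show ux b / u t b - ux a / u t a = 0
        rw [show ux a = 0 from ha0, show ux b = 0 from hb0]
        simp
      rw [← h0]
      apply intervalIntegral.integral_congr
      intro x hx
      have h := hune x hx
      field_simp
    have split1 : (∫ x in a..b, uxx x / u t x) = ∫ x in a..b, (ux x)^2 / (u t x)^2 := by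
      rw [intervalIntegral.integral_sub i_uxxu i_ratio] at hIBP1
      linarith
    -- integration by parts, step 2
    have hIBP2 : (∫ x in a..b, (gx x / u t x - g x * ux x / (u t x)^2)) = 0 := by
      have hψ : ∀ x ∈ Set.uIcc a b, HasDerivAt (fun y => g y / u t y)
          ((gx x * u t x - g x * ux x) / (u t x)^2) x := by
        intro x hx
        exact (hdg x).div (hdu x) (hune x hx)
      have hint : IntervalIntegrable (fun x => (gx x * u t x - g x * ux x) / (u t x)^2)
          volume a b := by
        apply ContinuousOn.intervalIntegrable
        rw [huIcc]
        exact (((hcont_gx.mul hcont_u).sub (hcont_g.mul hcont_ux)).continuousOn).div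
          ((hcont_u.pow 2).continuousOn) (fun x hx => pow_ne_zero 2 (hune' x hx))
      have h0 : (∫ x in a..b, (gx x * u t x - g x * ux x) / (u t x)^2) = 0 := by
        rw [intervalIntegral.integral_eq_sub_of_hasDerivAt hψ hint]
        obtain ⟨ha0, hb0⟩ := hbc_v t ht
        have hga : g a = 0 := by
          show u t a * vx a = 0
          rw [show vx a = 0 from ha0, mul_zero]
        have hgb : g b = 0 := by
          show u t b * vx b = 0
          rw [show vx b = 0 from hb0, mul_zero]
        show g b / u t b - g a / u t a = 0
        rw [hga, hgb]
        simp
      rw [← h0]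
      apply intervalIntegral.integral_congr
      intro x hx
      have h := hune x hx
      field_simp
    have split2 : (∫ x in a..b, gx x / u t x) = ∫ x in a..b, g x * ux x / (u t x)^2 := by
      rw [intervalIntegral.integral_sub i_gxu i_guxu2] at hIBP2
      linarith
    -- rewrite D using the PDE
    have hDeq : (∫ x in a..b, -(ut t x / u t x))
        = ∫ x in a..b, (-(uxx x / u t x) + χ * (gx x / u t x)) := by
      apply intervalIntegral.integral_congr
      intro x hx
      have hx' : x ∈ Icc a b := by rwa [huIcc] at hx
      have h1 : ut t x = deriv (fun s => u s x) t := ((hUt t x).deriv).symm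
      have h := hune x hx
      show -(ut t x / u t x) = -(uxx x / u t x) + χ * (gx x / u t x)
      rw [h1, hpde_u t ht x hx']
      have hgx : deriv (fun y => u t y * deriv (v t) y) x = gx x := rfl
      rw [hgx]
      field_simp
      ring
    have i_neg : IntervalIntegrable (fun x => -(uxx x / u t x)) volume a b := i_uxxu.neg
    have i_cm : IntervalIntegrable (fun x => χ * (gx x / u t x)) volume a b :=
      i_gxu.const_mul χ
    have hDsplit : (∫ x in a..b, -(ut t x / u t x))
        = -(∫ x in a..b, uxx x / u t x) + χ * ∫ x in a..b, gx x / u t x := by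
      rw [hDeq, intervalIntegral.integral_add i_neg i_cm,
        intervalIntegral.integral_neg, intervalIntegral.integral_const_mul]
    -- Young's inequality pointwise and integrated
    have hYoung : χ * (∫ x in a..b, g x * ux x / (u t x)^2)
        ≤ (1/2) * (∫ x in a..b, (ux x)^2 / (u t x)^2)
          + (χ^2/2) * ∫ x in a..b, (vx x)^2 := by
      have i_r2 : IntervalIntegrable (fun x => (1/2) * ((ux x)^2 / (u t x)^2)) volume a b :=
        i_ratio.const_mul (1/2)
      have i_v2 : IntervalIntegrable (fun x => (χ^2/2) * (vx x)^2) volume a b :=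
        i_vx2.const_mul (χ^2/2)
      have hmono : (∫ x in a..b, χ * (g x * ux x / (u t x)^2))
          ≤ ∫ x in a..b, ((1/2) * ((ux x)^2 / (u t x)^2) + (χ^2/2) * (vx x)^2) := by
        apply intervalIntegral.integral_mono_on hab.le (i_guxu2.const_mul χ) (i_r2.add i_v2)
        intro x hx
        have h := hune' x hx
        have e1 : χ * (g x * ux x / (u t x)^2) = χ * vx x * (ux x / u t x) := by
          rw [hgdef]
          field_simp
        have e2 : (ux x)^2 / (u t x)^2 = (ux x / u t x)^2 := by
          rw [div_pow]
        rw [e1, e2]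
        nlinarith [sq_nonneg (ux x / u t x - χ * vx x)]
      rw [intervalIntegral.integral_const_mul] at hmono
      rw [intervalIntegral.integral_add i_r2 i_v2,
        intervalIntegral.integral_const_mul, intervalIntegral.integral_const_mul] at hmono
      linarith
    rw [hDsplit, split1, split2]
    linarith
  -- side goals of dominated differentiation
  · filter_upwards with s
    exact (((Real.measurable_log.comp
      (hUc.comp (continuous_const.prodMk continuous_id)).measurable).neg)).aestronglyMeasurable
  · apply ContinuousOn.intervalIntegrable
    rw [Set.uIcc_of_le hab.le]
    exact (hcont_u.continuousOn.log (fun x hx => (hupos t ht x hx).ne')).neg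
  · apply Measurable.aestronglyMeasurable
    exact ((hutc.comp (continuous_const.prodMk continuous_id)).measurable.div
      (hUc.comp (continuous_const.prodMk continuous_id)).measurable).neg
  · filter_upwards with x hx s hs
    have hx' : x ∈ Icc a b := by
      rw [Set.uIoc_of_le hab.le] at hx
      exact Ioc_subset_Icc_self hx
    have hs' : s ∈ Icc (t - ε) (t + ε) := hball_sub hs
    have hmem : (s, x) ∈ K := ⟨hs', hx'⟩
    have hpos : 0 < u s x := hpos' s hs' x hx'
    have hMb : |ut s x| ≤ M := hMmax hmem
    have hcb : c ≤ u s x := hcmin hmem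
    rw [norm_neg, Real.norm_eq_abs, abs_div, abs_of_pos hpos]
    exact div_le_div₀ (le_trans (abs_nonneg _) hMb) hMb hcpos hcb
  · exact intervalIntegrable_const
  · filter_upwards with x hx s hs
    have hx' : x ∈ Icc a b := by
      rw [Set.uIoc_of_le hab.le] at hx
      exact Ioc_subset_Icc_self hx
    have hs' : s ∈ Icc (t - ε) (t + ε) := hball_sub hs
    have hpos : 0 < u s x := hpos' s hs' x hx'
    exact ((hUt s x).log hpos.ne').neg
end

section
/- One-dimensional dissipative energy law: if in addition u(t,x) > 0 and v(t,x) > 0 for all (t,x) ∈ [0,T] × [a,b], then for every t ∈ [0,T]: (d/dt)[ (μ/4) ∫ₐᵇ (u log u − u + 1) dx + (χ/2) ∫ₐᵇ (∂ₓ√v)² dx ] + μ ∫ₐᵇ (∂ₓ√u)² dx + χ ∫ₐᵇ (∂ₓₓ√v)² dx + (χ/3) ∫ₐᵇ (∂ₓ√v)⁴ / v dx + (μχ/2) ∫ₐᵇ u·(∂ₓ√v)² dx = 0. In particular, the energy E(u,v) = (μ/4)∫ₐᵇ(u log u − u + 1)dx + (χ/2)∫ₐᵇ(∂ₓ√v)²dx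 is non-increasing in time. -/
open MeasureTheory Set intervalIntegral
open scoped ContDiff

noncomputable def pd1 (F : ℝ × ℝ → ℝ) (p : ℝ × ℝ) : ℝ := fderiv ℝ F p (1, 0)
noncomputable def pd2 (F : ℝ × ℝ → ℝ) (p : ℝ × ℝ) : ℝ := fderiv ℝ F p (0, 1)

theorem hasDerivAt_pd1 {F : ℝ × ℝ → ℝ} (hF : ContDiff ℝ (⊤ : ℕ∞) F) (t x : ℝ) :
    HasDerivAt (fun s => F (s, x)) (pd1 F (t, x)) t := by
  have h1 : HasFDerivAt F (fderiv ℝ F (t, x)) (t, x) :=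
    (hF.differentiable (by simp) (t, x)).hasFDerivAt
  have h2 : HasDerivAt (fun s : ℝ => (s, x)) ((1 : ℝ), (0 : ℝ)) t := by
    simpa using (hasDerivAt_id t).prodMk (hasDerivAt_const t x)
  simpa [pd1, Function.comp_def] using h1.comp_hasDerivAt t h2

theorem hasDerivAt_pd2 {F : ℝ × ℝ → ℝ} (hF : ContDiff ℝ (⊤ : ℕ∞) F) (t x : ℝ) :
    HasDerivAt (fun y => F (t, y)) (pd2 F (t, x)) x := by
  have h1 : HasFDerivAt F (fderiv ℝ F (t, x)) (t, x) :=
    (hF.differentiable (by simp) (t, x)).hasFDerivAt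
  have h2 : HasDerivAt (fun y : ℝ => (t, y)) ((0 : ℝ), (1 : ℝ)) x := by
    simpa using (hasDerivAt_const x t).prodMk (hasDerivAt_id x)
  simpa [pd2, Function.comp_def] using h1.comp_hasDerivAt x h2

theorem contDiff_pd1 {F : ℝ × ℝ → ℝ} (hF : ContDiff ℝ (⊤ : ℕ∞) F) : ContDiff ℝ (⊤ : ℕ∞) (pd1 F) :=
  (hF.fderiv_right (by simp)).clm_apply contDiff_const

theorem contDiff_pd2 {F : ℝ × ℝ → ℝ} (hF : ContDiff ℝ (⊤ : ℕ∞) F) : ContDiff ℝ (⊤ : ℕ∞) (pd2 F) :=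
  (hF.fderiv_right (by simp)).clm_apply contDiff_const

theorem fderiv_apply_const {F : ℝ × ℝ → ℝ} (hF : ContDiff ℝ (⊤ : ℕ∞) F) (c : ℝ × ℝ) (p w : ℝ × ℝ) :
    fderiv ℝ (fun q => fderiv ℝ F q c) p w = fderiv ℝ (fderiv ℝ F) p w c := by
  have hA : DifferentiableAt ℝ (fderiv ℝ F) p :=
    (hF.fderiv_right (m := ∞) (by exact_mod_cast le_top)).differentiable (by simp) p
  have h : HasFDerivAt (fun q => fderiv ℝ F q c)
      ((ContinuousLinearMap.apply ℝ ℝ c).comp (fderiv ℝ (fderiv ℝ F) p)) p :=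
    (ContinuousLinearMap.apply ℝ ℝ c).hasFDerivAt.comp p hA.hasFDerivAt
  rw [h.fderiv]; rfl

theorem pd_comm {F : ℝ × ℝ → ℝ} (hF : ContDiff ℝ (⊤ : ℕ∞) F) (p : ℝ × ℝ) :
    pd1 (pd2 F) p = pd2 (pd1 F) p := by
  have hA : DifferentiableAt ℝ (fderiv ℝ F) p :=
    (hF.fderiv_right (m := ∞) (by exact_mod_cast le_top)).differentiable (by simp) p
  have hsymm := second_derivative_symmetric
    (fun y => (hF.differentiable (by simp) y).hasFDerivAt) hA.hasFDerivAt (1, 0) (0, 1)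
  unfold pd1 pd2
  rw [fderiv_apply_const hF, fderiv_apply_const hF, hsymm]

theorem hasDerivAt_param_integral {F F' : ℝ → ℝ → ℝ} {a b t₀ δ : ℝ} (hδ : 0 < δ)
    (hF : ∀ s ∈ Metric.ball t₀ δ, ContinuousOn (F s) (Set.uIcc a b))
    (hF' : ContinuousOn (fun p : ℝ × ℝ => F' p.1 p.2)
      (Set.Icc (t₀ - δ/2) (t₀ + δ/2) ×ˢ Set.uIcc a b))
    (hd : ∀ x ∈ Set.uIcc a b, ∀ s ∈ Metric.ball t₀ δ, HasDerivAt (fun s => F s x) (F' s x) s) :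
    HasDerivAt (fun s => ∫ x in a..b, F s x) (∫ x in a..b, F' t₀ x) t₀ := by
  have hcomp : IsCompact (Set.Icc (t₀ - δ/2) (t₀ + δ/2) ×ˢ Set.uIcc a b) :=
    isCompact_Icc.prod isCompact_uIcc
  obtain ⟨C, hC⟩ := hcomp.exists_bound_of_continuousOn hF'
  have hball : Metric.ball t₀ (δ/2) ⊆ Set.Icc (t₀ - δ/2) (t₀ + δ/2) := by
    intro s hs
    have := Real.ball_eq_Ioo t₀ (δ/2) ▸ hs
    exact ⟨le_of_lt this.1, le_of_lt this.2⟩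
  have hball2 : Metric.ball t₀ (δ/2) ⊆ Metric.ball t₀ δ :=
    Metric.ball_subset_ball (by linarith)
  have key := hasDerivAt_integral_of_dominated_loc_of_deriv_le (F := F) (F' := F')
    (μ := volume) (a := a) (b := b) (bound := fun _ => C)
    (Metric.ball_mem_nhds t₀ (half_pos hδ))
    (by
      filter_upwards [Metric.ball_mem_nhds t₀ hδ] with s hs
      exact ((hF s hs).mono (Set.uIoc_subset_uIcc)).aestronglyMeasurable measurableSet_uIoc)
    ((hF t₀ (Metric.mem_ball_self hδ)).intervalIntegrable)
    (by
      have : ContinuousOn (F' t₀) (Set.uIcc a b) := by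
        have h0 : Continuous (fun x : ℝ => (t₀, x)) := continuous_const.prodMk continuous_id
        exact hF'.comp h0.continuousOn
          (fun x hx => ⟨⟨by linarith, by linarith⟩, hx⟩)
      exact (this.mono Set.uIoc_subset_uIcc).aestronglyMeasurable measurableSet_uIoc)
    (ae_of_all _ fun x hx s hs =>
      hC (s, x) ⟨hball hs, Set.uIoc_subset_uIcc hx⟩)
    intervalIntegrable_const
    (ae_of_all _ fun x hx s hs =>
      hd x (Set.uIoc_subset_uIcc hx) s (hball2 hs))
  exact key.2

theorem pos_extend {f : ℝ × ℝ → ℝ} (hf : Continuous f) {a b T : ℝ} (hT : 0 ≤ T)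
    (h : ∀ p ∈ Set.Icc (0:ℝ) T ×ˢ Set.Icc a b, 0 < f p) :
    ∃ δ > 0, ∀ p ∈ Set.Icc (-δ) (T+δ) ×ˢ Set.Icc a b, 0 < f p := by
  have hK : IsCompact (Set.Icc (0:ℝ) T ×ˢ Set.Icc a b) :=
    isCompact_Icc.prod isCompact_Icc
  have hS : IsOpen {p : ℝ × ℝ | 0 < f p} := isOpen_lt continuous_const hf
  obtain ⟨δ, hδ, hsub⟩ := hK.exists_thickening_subset_open hS h
  refine ⟨δ/2, half_pos hδ, fun p hp => ?_⟩
  obtain ⟨⟨hs1, hs2⟩, hx⟩ := hp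
  set c : ℝ := max 0 (min p.1 T) with hc
  have hcK : (c, p.2) ∈ Set.Icc (0:ℝ) T ×ˢ Set.Icc a b := by
    constructor
    · exact ⟨le_max_left _ _, max_le hT (min_le_right _ _)⟩
    · exact hx
  have hdist : dist p.1 c ≤ δ/2 := by
    rw [Real.dist_eq, abs_le]
    rcases le_total p.1 0 with h1 | h1
    · have : c = 0 := by
        rw [hc, max_eq_left]; exact le_trans (min_le_left _ _) h1
      rw [this]; constructor <;> linarith
    · rcases le_total p.1 T with h2 | h2
      · have : c = p.1 := by rw [hc, min_eq_left h2, max_eq_right h1]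
        rw [this]; constructor <;> linarith [half_pos hδ]
      · have : c = T := by rw [hc, min_eq_right h2, max_eq_right hT]
        rw [this]; constructor <;> linarith
  apply hsub
  rw [Metric.mem_thickening_iff]
  refine ⟨(c, p.2), hcK, ?_⟩
  have : dist p (c, p.2) = max (dist p.1 c) (dist p.2 p.2) := rfl
  rw [this]
  simp only [dist_self]
  calc max (dist p.1 c) 0 ≤ δ/2 := by
        apply max_le hdist (le_of_lt (half_pos hδ))
    _ < δ := by linarith

theorem onevar (a b χ μ : ℝ) (hab : a < b)
    (U V Ut Vt : ℝ → ℝ)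
    (hU : ContDiff ℝ (⊤ : ℕ∞) U) (hV : ContDiff ℝ (⊤ : ℕ∞) V)
    (hUt : ContDiff ℝ (⊤ : ℕ∞) Ut) (hVt : ContDiff ℝ (⊤ : ℕ∞) Vt)
    (hUpos : ∀ x ∈ Set.Icc a b, 0 < U x) (hVpos : ∀ x ∈ Set.Icc a b, 0 < V x)
    (hbcU : deriv U a = 0 ∧ deriv U b = 0) (hbcV : deriv V a = 0 ∧ deriv V b = 0)
    (hpdeU : ∀ x ∈ Set.Icc a b, Ut x = deriv (deriv U) x - χ * deriv (fun y => U y * deriv V y) x)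
    (hpdeV : ∀ x ∈ Set.Icc a b, Vt x = deriv (deriv V) x - μ * U x * V x) :
    ((μ/4) * (∫ x in a..b, Ut x * Real.log (U x))
     + (χ/2) * (∫ x in a..b, 2 * (deriv V x / (2 * Real.sqrt (V x))) *
        ((deriv Vt x * (2 * Real.sqrt (V x)) - deriv V x * (Vt x / Real.sqrt (V x)))
          / (2 * Real.sqrt (V x))^2)))
    + μ * (∫ x in a..b, (deriv (fun y => Real.sqrt (U y)) x)^2)
    + χ * (∫ x in a..b, (deriv (deriv (fun y => Real.sqrt (V y))) x)^2)
    + (χ/3) * (∫ x in a..b, (deriv (fun y => Real.sqrt (V y)) x)^4 / V x)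
    + (μ * χ / 2) * (∫ x in a..b, U x * (deriv (fun y => Real.sqrt (V y)) x)^2) = 0 := by
  have hIcc : Set.uIcc a b = Set.Icc a b := Set.uIcc_of_le hab.le
  -- abbreviation for the second-derivative formula of sqrt V
  set W2f : ℝ → ℝ := fun x =>
    (deriv (deriv V) x * (2 * Real.sqrt (V x)) -
      deriv V x * (deriv V x / Real.sqrt (V x))) / (2 * Real.sqrt (V x))^2 with hW2f_def
  -- basic smoothness facts
  have hUc : Continuous U := hU.continuous
  have hVc : Continuous V := hV.continuous
  have hVtc : Continuous Vt := hVt.continuous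
  have hUtc : Continuous Ut := hUt.continuous
  have h1inf : (1 : WithTop ℕ∞) ≤ ∞ := by exact_mod_cast (le_top : (1:ℕ∞) ≤ ⊤)
  have hU1cd : ContDiff ℝ ∞ (deriv U) := (contDiff_infty_iff_deriv.mp (hU.of_le (by simp))).2
  have hV1cd : ContDiff ℝ ∞ (deriv V) := (contDiff_infty_iff_deriv.mp (hV.of_le (by simp))).2
  have hU1c : Continuous (deriv U) := hU1cd.continuous
  have hV1c : Continuous (deriv V) := hV1cd.continuous
  have hU2c : Continuous (deriv (deriv U)) := hU1cd.continuous_deriv h1inf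
  have hV2c : Continuous (deriv (deriv V)) := hV1cd.continuous_deriv h1inf
  have hVt1c : Continuous (deriv Vt) := hVt.continuous_deriv (by simp)
  have hUd : ∀ x, HasDerivAt U (deriv U x) x := fun x =>
    (hU.differentiable (by simp) x).hasDerivAt
  have hVd : ∀ x, HasDerivAt V (deriv V x) x := fun x =>
    (hV.differentiable (by simp) x).hasDerivAt
  have hVtd : ∀ x, HasDerivAt Vt (deriv Vt x) x := fun x =>
    (hVt.differentiable (by simp) x).hasDerivAt
  have hU1d : ∀ x, HasDerivAt (deriv U) (deriv (deriv U) x) x := fun x =>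
    (hU1cd.differentiable (by simp) x).hasDerivAt
  have hV1d : ∀ x, HasDerivAt (deriv V) (deriv (deriv V) x) x := fun x =>
    (hV1cd.differentiable (by simp) x).hasDerivAt
  -- positivity facts
  have hPV : IsOpen {x : ℝ | 0 < V x} := isOpen_lt continuous_const hVc
  have hσpos : ∀ x, 0 < V x → 0 < Real.sqrt (V x) := fun x hx => Real.sqrt_pos.2 hx
  have hσ2 : ∀ x, 0 < V x → (Real.sqrt (V x))^2 = V x := fun x hx => Real.sq_sqrt hx.le
  -- derivative of sqrt V
  have hσd : ∀ x, 0 < V x →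
      HasDerivAt (fun y => Real.sqrt (V y)) (deriv V x / (2 * Real.sqrt (V x))) x := by
    intro x hx
    have h := (Real.hasDerivAt_sqrt (ne_of_gt hx)).comp x (hVd x)
    simp only [Function.comp_def] at h
    refine h.congr_deriv ?_
    ring
  have h2σd : ∀ x, 0 < V x →
      HasDerivAt (fun y => 2 * Real.sqrt (V y)) (deriv V x / Real.sqrt (V x)) x := by
    intro x hx
    have h := (hσd x hx).const_mul 2
    refine h.congr_deriv ?_
    have := (hσpos x hx).ne'
    field_simp
  have h2σne : ∀ x, 0 < V x → 2 * Real.sqrt (V x) ≠ 0 := fun x hx => by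
    have := hσpos x hx; positivity
  -- derivative of W1f = deriv V / (2 sqrt V)
  have hW1fd : ∀ x, 0 < V x →
      HasDerivAt (fun y => deriv V y / (2 * Real.sqrt (V y))) (W2f x) x := by
    intro x hx
    exact (hV1d x).div (h2σd x hx) (h2σne x hx)
  -- deriv of sqrt V equals the formula, eventually
  have hW1eq : ∀ x, 0 < V x →
      deriv (fun y => Real.sqrt (V y)) x = deriv V x / (2 * Real.sqrt (V x)) :=
    fun x hx => (hσd x hx).deriv
  have hW1ev : ∀ x, 0 < V x →
      deriv (fun y => Real.sqrt (V y)) =ᶠ[nhds x] fun y => deriv V y / (2 * Real.sqrt (V y)) := by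
    intro x hx
    filter_upwards [hPV.mem_nhds hx] with y hy using hW1eq y hy
  have hW2eq : ∀ x, 0 < V x → deriv (deriv (fun y => Real.sqrt (V y))) x = W2f x := by
    intro x hx
    rw [(hW1ev x hx).deriv_eq]
    exact (hW1fd x hx).deriv
  -- derivative of sqrt U
  have hSUeq : ∀ x, 0 < U x →
      deriv (fun y => Real.sqrt (U y)) x = deriv U x / (2 * Real.sqrt (U x)) := by
    intro x hx
    have h := (Real.hasDerivAt_sqrt (ne_of_gt hx)).comp x (hUd x)
    simp only [Function.comp_def] at h
    rw [h.deriv]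
    ring
  -- integrability helper
  have hInt : ∀ {f : ℝ → ℝ}, ContinuousOn f (Set.Icc a b) → IntervalIntegrable f volume a b := by
    intro f hf
    apply ContinuousOn.intervalIntegrable
    rwa [hIcc]
  have hUne : ∀ x ∈ Set.Icc a b, U x ≠ 0 := fun x hx => (hUpos x hx).ne'
  have hσne : ∀ x ∈ Set.Icc a b, Real.sqrt (V x) ≠ 0 := fun x hx => (hσpos x (hVpos x hx)).ne'
  have h2σne' : ∀ x ∈ Set.Icc a b, 2 * Real.sqrt (V x) ≠ 0 := fun x hx => h2σne x (hVpos x hx)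
  have hsqc : Continuous (fun x => Real.sqrt (V x)) := Real.continuous_sqrt.comp hVc
  have hlogc : ContinuousOn (fun x => Real.log (U x)) (Set.Icc a b) := fun x hx =>
    (((Real.continuousAt_log (hUne x hx)).comp hUc.continuousAt).continuousWithinAt)
  have hW1fcont : ContinuousOn (fun x => deriv V x / (2 * Real.sqrt (V x))) (Set.Icc a b) :=
    hV1c.continuousOn.div (continuous_const.mul hsqc).continuousOn h2σne'
  have hW2fcont : ContinuousOn W2f (Set.Icc a b) := by
    rw [hW2f_def]
    exact ((hV2c.continuousOn.mul (continuous_const.mul hsqc).continuousOn).sub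
      (hV1c.continuousOn.mul (hV1c.continuousOn.div hsqc.continuousOn hσne))).div
      ((continuous_const.mul hsqc).pow 2).continuousOn
      (fun x hx => pow_ne_zero 2 (h2σne' x hx))
  have hWtcont : ContinuousOn (fun x => Vt x / (2 * Real.sqrt (V x))) (Set.Icc a b) :=
    hVtc.continuousOn.div (continuous_const.mul hsqc).continuousOn h2σne'
  have hlogd : ∀ x ∈ Set.Icc a b, HasDerivAt (fun y => Real.log (U y)) (deriv U x / U x) x := by
    intro x hx
    have h := (Real.hasDerivAt_log (hUne x hx)).comp x (hUd x)
    simp only [Function.comp_def] at h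
    refine h.congr_deriv ?_
    ring
  -- IBP-A : ∫ log U * U'' = - ∫ U'^2/U
  have eA : (∫ x in a..b, Real.log (U x) * deriv (deriv U) x)
      = -∫ x in a..b, (deriv U x)^2 / U x := by
    have h := intervalIntegral.integral_mul_deriv_eq_deriv_mul
      (u := fun x => Real.log (U x)) (u' := fun x => deriv U x / U x)
      (v := deriv U) (v' := fun x => deriv (deriv U) x)
      (fun x hx => hlogd x (hIcc ▸ hx)) (fun x _ => hU1d x)
      (hInt (hU1c.continuousOn.div hUc.continuousOn hUne))
      (hInt hU2c.continuousOn)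
    rw [hbcU.1, hbcU.2] at h
    simp only [mul_zero, sub_zero, zero_sub] at h
    rw [h, neg_inj]
    apply intervalIntegral.integral_congr
    intro x _
    simp only
    ring
  -- IBP-B : ∫ log U * (U V')' = - ∫ U' V'
  have hP1cd : ContDiff ℝ ∞ (fun y => U y * deriv V y) := (hU.of_le (by simp)).mul hV1cd
  have hP1d : ∀ x, HasDerivAt (fun y => U y * deriv V y)
      (deriv (fun y => U y * deriv V y) x) x := fun x =>
    (hP1cd.differentiable (by simp) x).hasDerivAt
  have hP1'c : Continuous (deriv (fun y => U y * deriv V y)) := hP1cd.continuous_deriv h1inf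
  have eB : (∫ x in a..b, Real.log (U x) * deriv (fun y => U y * deriv V y) x)
      = -∫ x in a..b, deriv U x * deriv V x := by
    have h := intervalIntegral.integral_mul_deriv_eq_deriv_mul
      (u := fun x => Real.log (U x)) (u' := fun x => deriv U x / U x)
      (v := fun y => U y * deriv V y) (v' := fun x => deriv (fun y => U y * deriv V y) x)
      (fun x hx => hlogd x (hIcc ▸ hx)) (fun x _ => hP1d x)
      (hInt (hU1c.continuousOn.div hUc.continuousOn hUne))
      (hInt hP1'c.continuousOn)
    beta_reduce at h
    rw [hbcV.1, hbcV.2] at h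
    simp only [mul_zero, sub_zero, zero_sub] at h
    rw [h, neg_inj]
    apply intervalIntegral.integral_congr
    intro x hx
    have hx' : x ∈ Set.Icc a b := hIcc ▸ hx
    simp only
    field_simp [hUne x hx']
  -- k1
  have k1 : (∫ x in a..b, Ut x * Real.log (U x))
      = -(∫ x in a..b, (deriv U x)^2 / U x) + χ * ∫ x in a..b, deriv U x * deriv V x := by
    have e1 : (∫ x in a..b, Ut x * Real.log (U x))
        = ∫ x in a..b, (Real.log (U x) * deriv (deriv U) x
            - χ * (Real.log (U x) * deriv (fun y => U y * deriv V y) x)) := by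
      apply intervalIntegral.integral_congr
      intro x hx
      have hx' : x ∈ Set.Icc a b := hIcc ▸ hx
      simp only
      rw [hpdeU x hx']
      ring
    rw [e1, intervalIntegral.integral_sub (hInt (hlogc.fun_mul hU2c.continuousOn))
      (hInt ((continuous_const.continuousOn).fun_mul (hlogc.fun_mul hP1'c.continuousOn))),
      intervalIntegral.integral_const_mul, eA, eB]
    ring
  -- time-derivative of sqrt V : W-form function
  have hWtd : ∀ x, 0 < V x → HasDerivAt (fun y => Vt y / (2 * Real.sqrt (V y)))
      ((deriv Vt x * (2 * Real.sqrt (V x)) - Vt x * (deriv V x / Real.sqrt (V x)))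
        / (2 * Real.sqrt (V x))^2) x :=
    fun x hx => (hVtd x).div (h2σd x hx) (h2σne x hx)
  have hWtdcont : ContinuousOn (fun x =>
      (deriv Vt x * (2 * Real.sqrt (V x)) - Vt x * (deriv V x / Real.sqrt (V x)))
        / (2 * Real.sqrt (V x))^2) (Set.Icc a b) :=
    ((hVt1c.continuousOn.mul (continuous_const.mul hsqc).continuousOn).sub
      (hVtc.continuousOn.mul (hV1c.continuousOn.div hsqc.continuousOn hσne))).div
      ((continuous_const.mul hsqc).pow 2).continuousOn
      (fun x hx => pow_ne_zero 2 (h2σne' x hx))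
  -- IBP-C
  have eC : (∫ x in a..b, 2 * (deriv V x / (2 * Real.sqrt (V x))) *
      ((deriv Vt x * (2 * Real.sqrt (V x)) - Vt x * (deriv V x / Real.sqrt (V x)))
        / (2 * Real.sqrt (V x))^2))
      = - ∫ x in a..b, 2 * W2f x * (Vt x / (2 * Real.sqrt (V x))) := by
    have h := intervalIntegral.integral_mul_deriv_eq_deriv_mul
      (u := fun x => 2 * (deriv V x / (2 * Real.sqrt (V x)))) (u' := fun x => 2 * W2f x)
      (v := fun x => Vt x / (2 * Real.sqrt (V x)))
      (v' := fun x => (deriv Vt x * (2 * Real.sqrt (V x)) - Vt x * (deriv V x / Real.sqrt (V x)))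
        / (2 * Real.sqrt (V x))^2)
      (fun x hx => (hW1fd x (hVpos x (hIcc ▸ hx))).const_mul 2)
      (fun x hx => hWtd x (hVpos x (hIcc ▸ hx)))
      (hInt (continuous_const.continuousOn.mul hW2fcont))
      (hInt hWtdcont)
    beta_reduce at h
    rw [hbcV.1, hbcV.2] at h
    simp only [zero_div, mul_zero, zero_mul, sub_zero, zero_sub] at h
    rw [h]
  -- pointwise PDE identity for Wt
  have hWtid : ∀ x ∈ Set.Icc a b, Vt x / (2 * Real.sqrt (V x))
      = W2f x + (deriv V x / (2 * Real.sqrt (V x)))^2 / Real.sqrt (V x)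
        - μ/2 * (U x * Real.sqrt (V x)) := by
    intro x hx
    have hVx := hVpos x hx
    have hsne := (hσpos x hVx).ne'
    rw [hpdeV x hx, hW2f_def]
    simp only
    set s := Real.sqrt (V x) with hs
    rw [show V x = s^2 from (hσ2 x hVx).symm]
    field_simp
    ring
  -- expand the integrand
  have eD1 : (∫ x in a..b, 2 * W2f x * (Vt x / (2 * Real.sqrt (V x))))
      = ∫ x in a..b, (2 * (W2f x)^2
          + (2/3) * ((Real.sqrt (V x))⁻¹ * (3 * (deriv V x / (2 * Real.sqrt (V x)))^2 * W2f x))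
          - μ * ((U x * Real.sqrt (V x)) * W2f x)) := by
    apply intervalIntegral.integral_congr
    intro x hx
    have hx' : x ∈ Set.Icc a b := hIcc ▸ hx
    simp only
    rw [hWtid x hx']
    ring
  -- split integral
  have hCint : ContinuousOn (fun x => 2 * (W2f x)^2) (Set.Icc a b) :=
    continuous_const.continuousOn.mul (hW2fcont.pow 2)
  have hDint : ContinuousOn (fun x =>
      (2/3) * ((Real.sqrt (V x))⁻¹ * (3 * (deriv V x / (2 * Real.sqrt (V x)))^2 * W2f x)))
      (Set.Icc a b) :=
    continuous_const.continuousOn.mul ((hsqc.continuousOn.inv₀ hσne).mul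
      ((continuous_const.continuousOn.mul (hW1fcont.pow 2)).mul hW2fcont))
  have hEint : ContinuousOn (fun x => μ * ((U x * Real.sqrt (V x)) * W2f x)) (Set.Icc a b) :=
    continuous_const.continuousOn.mul ((hUc.continuousOn.mul hsqc.continuousOn).mul hW2fcont)
  have eD2 : (∫ x in a..b, (2 * (W2f x)^2
          + (2/3) * ((Real.sqrt (V x))⁻¹ * (3 * (deriv V x / (2 * Real.sqrt (V x)))^2 * W2f x))
          - μ * ((U x * Real.sqrt (V x)) * W2f x)))
      = 2 * (∫ x in a..b, (W2f x)^2)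
        + (2/3) * (∫ x in a..b, (Real.sqrt (V x))⁻¹ * (3 * (deriv V x / (2 * Real.sqrt (V x)))^2 * W2f x))
        - μ * (∫ x in a..b, (U x * Real.sqrt (V x)) * W2f x) := by
    rw [intervalIntegral.integral_sub (IntervalIntegrable.add (hInt hCint) (hInt hDint)) (hInt hEint),
      intervalIntegral.integral_add (hInt hCint) (hInt hDint),
      intervalIntegral.integral_const_mul, intervalIntegral.integral_const_mul,
      intervalIntegral.integral_const_mul]
  -- IBP-D
  have eD3 : (∫ x in a..b, (Real.sqrt (V x))⁻¹ * (3 * (deriv V x / (2 * Real.sqrt (V x)))^2 * W2f x))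
      = ∫ x in a..b, (deriv V x / (2 * Real.sqrt (V x)))^4 / V x := by
    have hW1f3d : ∀ x, 0 < V x → HasDerivAt (fun y => (deriv V y / (2 * Real.sqrt (V y)))^3)
        (3 * (deriv V x / (2 * Real.sqrt (V x)))^2 * W2f x) x := by
      intro x hx
      have h := (hW1fd x hx).pow 3
      norm_num at h
      exact h
    have hinvd : ∀ x, 0 < V x → HasDerivAt (fun y => (Real.sqrt (V y))⁻¹)
        (-(deriv V x / (2 * Real.sqrt (V x))) / (Real.sqrt (V x))^2) x :=
      fun x hx => (hσd x hx).inv (hσpos x hx).ne'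
    have h := intervalIntegral.integral_mul_deriv_eq_deriv_mul
      (u := fun x => (Real.sqrt (V x))⁻¹)
      (u' := fun x => -(deriv V x / (2 * Real.sqrt (V x))) / (Real.sqrt (V x))^2)
      (v := fun x => (deriv V x / (2 * Real.sqrt (V x)))^3)
      (v' := fun x => 3 * (deriv V x / (2 * Real.sqrt (V x)))^2 * W2f x)
      (fun x hx => hinvd x (hVpos x (hIcc ▸ hx)))
      (fun x hx => hW1f3d x (hVpos x (hIcc ▸ hx)))
      (hInt (((hV1c.continuousOn.div (continuous_const.mul hsqc).continuousOn h2σne').neg).div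
        (hsqc.continuousOn.pow 2) (fun x hx => pow_ne_zero 2 (hσne x hx))))
      (hInt ((continuous_const.continuousOn.mul (hW1fcont.pow 2)).mul hW2fcont))
    beta_reduce at h
    rw [hbcV.1, hbcV.2] at h
    simp only [zero_div, zero_pow, mul_zero, zero_mul, sub_zero, zero_sub, ne_eq,
      OfNat.ofNat_ne_zero, not_false_eq_true] at h
    rw [h, ← intervalIntegral.integral_neg]
    apply intervalIntegral.integral_congr
    intro x hx
    have hx' : x ∈ Set.Icc a b := hIcc ▸ hx
    have hVx := hVpos x hx'
    simp only
    rw [hσ2 x hVx]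
    ring
  -- IBP-E
  have eD4 : (∫ x in a..b, (U x * Real.sqrt (V x)) * W2f x)
      = -((1/2) * (∫ x in a..b, deriv U x * deriv V x)
          + ∫ x in a..b, U x * (deriv V x / (2 * Real.sqrt (V x)))^2) := by
    have hUσd : ∀ x, 0 < V x → HasDerivAt (fun y => U y * Real.sqrt (V y))
        (deriv U x * Real.sqrt (V x) + U x * (deriv V x / (2 * Real.sqrt (V x)))) x :=
      fun x hx => (hUd x).mul (hσd x hx)
    have h := intervalIntegral.integral_mul_deriv_eq_deriv_mul
      (u := fun x => U x * Real.sqrt (V x))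
      (u' := fun x => deriv U x * Real.sqrt (V x) + U x * (deriv V x / (2 * Real.sqrt (V x))))
      (v := fun x => deriv V x / (2 * Real.sqrt (V x)))
      (v' := W2f)
      (fun x hx => hUσd x (hVpos x (hIcc ▸ hx)))
      (fun x hx => hW1fd x (hVpos x (hIcc ▸ hx)))
      (hInt ((hU1c.continuousOn.mul hsqc.continuousOn).add (hUc.continuousOn.mul hW1fcont)))
      (hInt hW2fcont)
    beta_reduce at h
    rw [hbcV.1, hbcV.2] at h
    simp only [zero_div, mul_zero, zero_mul, sub_zero, zero_sub] at h
    rw [h, neg_inj]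
    have hsplit : (∫ x in a..b, (deriv U x * Real.sqrt (V x) + U x * (deriv V x / (2 * Real.sqrt (V x))))
        * (deriv V x / (2 * Real.sqrt (V x))))
        = ∫ x in a..b, ((1/2) * (deriv U x * deriv V x) + U x * (deriv V x / (2 * Real.sqrt (V x)))^2) := by
      apply intervalIntegral.integral_congr
      intro x hx
      have hx' : x ∈ Set.Icc a b := hIcc ▸ hx
      have hsne := hσne x hx'
      simp only
      field_simp
    rw [hsplit, intervalIntegral.integral_add
      (hInt (continuous_const.continuousOn.fun_mul (hU1c.continuousOn.fun_mul hV1c.continuousOn)))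
      (hInt (hUc.continuousOn.fun_mul (hW1fcont.fun_pow 2))),
      intervalIntegral.integral_const_mul]
  have k2 : (∫ x in a..b, 2 * (deriv V x / (2 * Real.sqrt (V x))) *
      ((deriv Vt x * (2 * Real.sqrt (V x)) - deriv V x * (Vt x / Real.sqrt (V x)))
        / (2 * Real.sqrt (V x))^2))
      = -(2 * (∫ x in a..b, (W2f x)^2)
          + (2/3) * (∫ x in a..b, (deriv V x / (2 * Real.sqrt (V x)))^4 / V x)
          + (μ/2) * (∫ x in a..b, deriv U x * deriv V x)
          + μ * (∫ x in a..b, U x * (deriv V x / (2 * Real.sqrt (V x)))^2)) := by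
    have e0 : (∫ x in a..b, 2 * (deriv V x / (2 * Real.sqrt (V x))) *
        ((deriv Vt x * (2 * Real.sqrt (V x)) - deriv V x * (Vt x / Real.sqrt (V x)))
          / (2 * Real.sqrt (V x))^2))
        = ∫ x in a..b, 2 * (deriv V x / (2 * Real.sqrt (V x))) *
        ((deriv Vt x * (2 * Real.sqrt (V x)) - Vt x * (deriv V x / Real.sqrt (V x)))
          / (2 * Real.sqrt (V x))^2) := by
      apply intervalIntegral.integral_congr
      intro x hx
      simp only
      ring
    rw [e0, eC, eD1, eD2, eD3, eD4]
    ring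
  have E4 : (∫ x in a..b, (deriv (fun y => Real.sqrt (U y)) x)^2)
      = (1/4) * ∫ x in a..b, (deriv U x)^2 / U x := by
    rw [← intervalIntegral.integral_const_mul]
    apply intervalIntegral.integral_congr
    intro x hx
    have hx' : x ∈ Set.Icc a b := hIcc ▸ hx
    have hUx := hUpos x hx'
    simp only
    rw [hSUeq x hUx, div_pow, mul_pow, Real.sq_sqrt hUx.le]
    ring
  have E5 : (∫ x in a..b, (deriv (deriv (fun y => Real.sqrt (V y))) x)^2)
      = ∫ x in a..b, (W2f x)^2 := by
    apply intervalIntegral.integral_congr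
    intro x hx
    have hx' : x ∈ Set.Icc a b := hIcc ▸ hx
    simp only
    rw [hW2eq x (hVpos x hx')]
  have E6 : (∫ x in a..b, (deriv (fun y => Real.sqrt (V y)) x)^4 / V x)
      = ∫ x in a..b, (deriv V x / (2 * Real.sqrt (V x)))^4 / V x := by
    apply intervalIntegral.integral_congr
    intro x hx
    have hx' : x ∈ Set.Icc a b := hIcc ▸ hx
    simp only
    rw [hW1eq x (hVpos x hx')]
  have E7 : (∫ x in a..b, U x * (deriv (fun y => Real.sqrt (V y)) x)^2)
      = ∫ x in a..b, U x * (deriv V x / (2 * Real.sqrt (V x)))^2 := by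
    apply intervalIntegral.integral_congr
    intro x hx
    have hx' : x ∈ Set.Icc a b := hIcc ▸ hx
    simp only
    rw [hW1eq x (hVpos x hx')]
  rw [k1, k2, E4, E5, E6, E7]
  ring

/-- One-dimensional dissipative energy law: if u > 0 and v > 0, then the energy
E(t) = (μ/4)∫(u log u − u + 1) + (χ/2)∫(∂ₓ√v)² satisfies, for every t ∈ [0,T],
E'(t) + μ∫(∂ₓ√u)² + χ∫(∂ₓₓ√v)² + (χ/3)∫(∂ₓ√v)⁴/v + (μχ/2)∫u(∂ₓ√v)² = 0;
in particular E is non-increasing in time. -/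
theorem energy_dissipation_law_1d
    (a b T χ μ : ℝ) (hab : a < b) (hT : 0 < T) (hχ : 0 < χ) (hμ : 0 < μ)
    (u v : ℝ → ℝ → ℝ)
    (hu : ContDiff ℝ (⊤ : ℕ∞) (fun p : ℝ × ℝ => u p.1 p.2))
    (hv : ContDiff ℝ (⊤ : ℕ∞) (fun p : ℝ × ℝ => v p.1 p.2))
    (hpde_u : ∀ t ∈ Set.Icc (0:ℝ) T, ∀ x ∈ Set.Icc a b,
      deriv (fun s => u s x) t
        = deriv (deriv (u t)) x - χ * deriv (fun y => u t y * deriv (v t) y) x)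
    (hpde_v : ∀ t ∈ Set.Icc (0:ℝ) T, ∀ x ∈ Set.Icc a b,
      deriv (fun s => v s x) t
        = deriv (deriv (v t)) x - μ * u t x * v t x)
    (hbc_u : ∀ t ∈ Set.Icc (0:ℝ) T, deriv (u t) a = 0 ∧ deriv (u t) b = 0)
    (hbc_v : ∀ t ∈ Set.Icc (0:ℝ) T, deriv (v t) a = 0 ∧ deriv (v t) b = 0)
    (hupos : ∀ t ∈ Set.Icc (0:ℝ) T, ∀ x ∈ Set.Icc a b, 0 < u t x)
    (hvpos : ∀ t ∈ Set.Icc (0:ℝ) T, ∀ x ∈ Set.Icc a b, 0 < v t x) :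
    (∀ t ∈ Set.Icc (0:ℝ) T, ∃ D : ℝ,
      HasDerivAt (fun s =>
          (μ/4) * (∫ x in a..b, (u s x * Real.log (u s x) - u s x + 1))
          + (χ/2) * ∫ x in a..b, (deriv (fun y => Real.sqrt (v s y)) x)^2) D t ∧
      D + μ * (∫ x in a..b, (deriv (fun y => Real.sqrt (u t y)) x)^2)
        + χ * (∫ x in a..b, (deriv (deriv (fun y => Real.sqrt (v t y))) x)^2)
        + (χ/3) * (∫ x in a..b, (deriv (fun y => Real.sqrt (v t y)) x)^4 / v t x)
        + (μ * χ / 2) * (∫ x in a..b, u t x * (deriv (fun y => Real.sqrt (v t y)) x)^2)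
        = 0) ∧
    (∀ s ∈ Set.Icc (0:ℝ) T, ∀ t ∈ Set.Icc (0:ℝ) T, s ≤ t →
      (μ/4) * (∫ x in a..b, (u t x * Real.log (u t x) - u t x + 1))
        + (χ/2) * (∫ x in a..b, (deriv (fun y => Real.sqrt (v t y)) x)^2)
      ≤ (μ/4) * (∫ x in a..b, (u s x * Real.log (u s x) - u s x + 1))
        + (χ/2) * ∫ x in a..b, (deriv (fun y => Real.sqrt (v s y)) x)^2) := by
  have hIcc : Set.uIcc a b = Set.Icc a b := Set.uIcc_of_le hab.le
  -- extended positivity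
  obtain ⟨δ₁, hδ₁, hupos'⟩ := pos_extend hu.continuous hT.le
    (fun p hp => hupos p.1 hp.1 p.2 hp.2)
  obtain ⟨δ₂, hδ₂, hvpos'⟩ := pos_extend hv.continuous hT.le
    (fun p hp => hvpos p.1 hp.1 p.2 hp.2)
  set δ₀ : ℝ := min δ₁ δ₂ with hδ₀def
  have hδ₀ : 0 < δ₀ := lt_min hδ₁ hδ₂
  have hupos2 : ∀ s x, s ∈ Set.Icc (-δ₀) (T+δ₀) → x ∈ Set.Icc a b → 0 < u s x := by
    intro s x hs hx
    exact hupos' (s, x) ⟨⟨by have := hs.1; have : δ₀ ≤ δ₁ := min_le_left _ _; linarith [hs.1],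
      by have : δ₀ ≤ δ₁ := min_le_left _ _; linarith [hs.2]⟩, hx⟩
  have hvpos2 : ∀ s x, s ∈ Set.Icc (-δ₀) (T+δ₀) → x ∈ Set.Icc a b → 0 < v s x := by
    intro s x hs hx
    exact hvpos' (s, x) ⟨⟨by have : δ₀ ≤ δ₂ := min_le_right _ _; linarith [hs.1],
      by have : δ₀ ≤ δ₂ := min_le_right _ _; linarith [hs.2]⟩, hx⟩
  -- continuity of slices
  have hus : ∀ s, Continuous (u s) :=
    fun s => hu.continuous.comp (continuous_const.prodMk continuous_id)
  have hvs : ∀ s, Continuous (v s) :=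
    fun s => hv.continuous.comp (continuous_const.prodMk continuous_id)
  -- ball inclusion
  have hball : ∀ t ∈ Set.Icc (0:ℝ) T, ∀ s ∈ Metric.ball t δ₀, s ∈ Set.Icc (-δ₀) (T+δ₀) := by
    intro t ht s hs
    rw [Metric.mem_ball, Real.dist_eq, abs_lt] at hs
    exact ⟨by linarith [ht.1], by linarith [ht.2]⟩
  have hIccsub : ∀ t ∈ Set.Icc (0:ℝ) T, Set.Icc (t - δ₀/2) (t + δ₀/2) ⊆ Set.Icc (-δ₀) (T+δ₀) := by
    intro t ht s hs
    exact ⟨by linarith [hs.1, ht.1, hδ₀], by linarith [hs.2, ht.2, hδ₀]⟩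
  -- derivative of the entropy integral
  have keyA : ∀ t ∈ Set.Icc (0:ℝ) T,
      HasDerivAt (fun s => ∫ x in a..b, (u s x * Real.log (u s x) - u s x + 1))
        (∫ x in a..b, pd1 (fun p : ℝ × ℝ => u p.1 p.2) (t, x) * Real.log (u t x)) t := by
    intro t ht
    refine hasDerivAt_param_integral (δ := δ₀)
      (F := fun s x => u s x * Real.log (u s x) - u s x + 1)
      (F' := fun s x => pd1 (fun p : ℝ × ℝ => u p.1 p.2) (s, x) * Real.log (u s x))
      hδ₀ ?_ ?_ ?_
    · intro s hs
      have hs' := hball t ht s hs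
      rw [hIcc]
      intro x hx
      have hpos := hupos2 s x hs' hx
      have hcont : ContinuousAt (fun x => u s x * Real.log (u s x) - u s x + 1) x := by
        have h1 : ContinuousAt (u s) x := (hus s).continuousAt
        have h2 : ContinuousAt (fun x => Real.log (u s x)) x :=
          (Real.continuousAt_log hpos.ne').comp h1
        exact (((h1.mul h2).sub h1).add continuousAt_const)
      exact hcont.continuousWithinAt
    · rw [hIcc]
      intro p hp
      have hp1 : p.1 ∈ Set.Icc (-δ₀) (T+δ₀) := hIccsub t ht hp.1
      have hpos := hupos2 p.1 p.2 hp1 hp.2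
      have h1 : ContinuousAt (fun q : ℝ × ℝ => pd1 (fun p : ℝ × ℝ => u p.1 p.2) (q.1, q.2)) p :=
        ((contDiff_pd1 hu).continuous.comp (continuous_fst.prodMk continuous_snd)).continuousAt
      have h2 : ContinuousAt (fun q : ℝ × ℝ => Real.log (u q.1 q.2)) p :=
        ContinuousAt.comp (g := Real.log) (f := fun q : ℝ × ℝ => u q.1 q.2)
          (Real.continuousAt_log hpos.ne') hu.continuous.continuousAt
      exact (h1.mul h2).continuousWithinAt
    · rw [hIcc]
      intro x hx s hs
      have hs' := hball t ht s hs
      have hpos := hupos2 s x hs' hx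
      have hφ : HasDerivAt (fun s' => u s' x) (pd1 (fun p : ℝ × ℝ => u p.1 p.2) (s, x)) s :=
        hasDerivAt_pd1 hu s x
      have hlog : HasDerivAt (fun s' => Real.log (u s' x))
          ((u s x)⁻¹ * pd1 (fun p : ℝ × ℝ => u p.1 p.2) (s, x)) s := by
        have h := (Real.hasDerivAt_log hpos.ne').comp s hφ
        simpa [Function.comp_def] using h
      have h := ((hφ.mul hlog).sub hφ).add_const 1
      refine h.congr_deriv ?_
      field_simp
      ring
  -- notation for the second integrand
  set Fv : ℝ × ℝ → ℝ := fun p => v p.1 p.2 with hFvdef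
  set Q : ℝ × ℝ → ℝ := fun p => pd2 Fv p / (2 * Real.sqrt (v p.1 p.2)) with hQdef
  set Q' : ℝ × ℝ → ℝ := fun p =>
    (pd1 (pd2 Fv) p * (2 * Real.sqrt (v p.1 p.2))
      - pd2 Fv p * (pd1 Fv p / Real.sqrt (v p.1 p.2))) / (2 * Real.sqrt (v p.1 p.2))^2
    with hQ'def
  have hΩ : IsOpen {p : ℝ × ℝ | 0 < v p.1 p.2} := isOpen_lt continuous_const hv.continuous
  have hQd : ∀ s x, 0 < v s x → HasDerivAt (fun y => Real.sqrt (v s y)) (Q (s, x)) x := by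
    intro s x h
    have h1 := (Real.hasDerivAt_sqrt h.ne').comp x (hasDerivAt_pd2 hv s x)
    simp only [Function.comp_def] at h1
    refine h1.congr_deriv ?_
    simp only [hQdef]
    ring
  have hQeq : ∀ s x, 0 < v s x → deriv (fun y => Real.sqrt (v s y)) x = Q (s, x) :=
    fun s x h => (hQd s x h).deriv
  have keyB : ∀ t ∈ Set.Icc (0:ℝ) T,
      HasDerivAt (fun s => ∫ x in a..b, (deriv (fun y => Real.sqrt (v s y)) x)^2)
        (∫ x in a..b, 2 * Q (t, x) * Q' (t, x)) t := by
    intro t ht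
    refine hasDerivAt_param_integral (δ := δ₀)
      (F := fun s x => (deriv (fun y => Real.sqrt (v s y)) x)^2)
      (F' := fun s x => 2 * Q (s, x) * Q' (s, x)) hδ₀ ?_ ?_ ?_
    · intro s hs
      have hs' := hball t ht s hs
      rw [hIcc]
      have hc : ContinuousOn (fun x => (Q (s, x))^2) (Set.Icc a b) := by
        intro x hx
        have hpos := hvpos2 s x hs' hx
        have hd2 : ContinuousAt (fun x => pd2 Fv (s, x)) x :=
          ((contDiff_pd2 hv).continuous.comp (continuous_const.prodMk continuous_id)).continuousAt
        have hsq : ContinuousAt (fun x => Real.sqrt (v s x)) x :=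
          (Real.continuous_sqrt.comp (hvs s)).continuousAt
        have hne : 2 * Real.sqrt (v s x) ≠ 0 := by
          have := Real.sqrt_pos.2 hpos
          positivity
        exact ((hd2.div (continuousAt_const.mul hsq) hne).pow 2).continuousWithinAt
      apply hc.congr
      intro x hx
      beta_reduce
      rw [hQeq s x (hvpos2 s x hs' hx)]
    · rw [hIcc]
      intro p hp
      have hp1 : p.1 ∈ Set.Icc (-δ₀) (T+δ₀) := hIccsub t ht hp.1
      have hpos := hvpos2 p.1 p.2 hp1 hp.2
      have hsqne : Real.sqrt (v p.1 p.2) ≠ 0 := (Real.sqrt_pos.2 hpos).ne'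
      have h2sqne : 2 * Real.sqrt (v p.1 p.2) ≠ 0 := by
        have := Real.sqrt_pos.2 hpos
        positivity
      have hsqc : Continuous (fun q : ℝ × ℝ => Real.sqrt (v q.1 q.2)) :=
        Real.continuous_sqrt.comp hv.continuous
      have hQc : ContinuousAt Q p :=
        ((contDiff_pd2 hv).continuous.continuousAt).div
          ((continuous_const.mul hsqc).continuousAt) h2sqne
      have hQ'c : ContinuousAt Q' p := by
        refine ContinuousAt.div ?_ ?_ (pow_ne_zero 2 h2sqne)
        · exact (((contDiff_pd1 (contDiff_pd2 hv)).continuous.continuousAt).mul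
            ((continuous_const.mul hsqc).continuousAt)).sub
            (((contDiff_pd2 hv).continuous.continuousAt).mul
              (((contDiff_pd1 hv).continuous.continuousAt).div hsqc.continuousAt hsqne))
        · exact ((continuous_const.mul hsqc).continuousAt).pow 2
      exact ((continuousAt_const.mul hQc).mul hQ'c).continuousWithinAt
    · rw [hIcc]
      intro x hx s hs
      have hs' := hball t ht s hs
      have hpos := hvpos2 s x hs' hx
      have hev : (fun s' => (deriv (fun y => Real.sqrt (v s' y)) x)^2)
          =ᶠ[nhds s] (fun s' => (Q (s', x))^2) := by
        have hopen : IsOpen {s' : ℝ | 0 < v s' x} :=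
          hΩ.preimage (continuous_id.prodMk continuous_const)
        filter_upwards [hopen.mem_nhds hpos] with s'' h''
        rw [hQeq s'' x h'']
      have hnum : HasDerivAt (fun s' => pd2 Fv (s', x)) (pd1 (pd2 Fv) (s, x)) s :=
        hasDerivAt_pd1 (contDiff_pd2 hv) s x
      have hsq : HasDerivAt (fun s' => Real.sqrt (v s' x))
          (1/(2*Real.sqrt (v s x)) * pd1 Fv (s, x)) s := by
        have h := (Real.hasDerivAt_sqrt hpos.ne').comp s (hasDerivAt_pd1 hv s x)
        simpa [Function.comp_def] using h
      have hsqne : Real.sqrt (v s x) ≠ 0 := (Real.sqrt_pos.2 hpos).ne'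
      have h2sqne : 2 * Real.sqrt (v s x) ≠ 0 := by
        have := Real.sqrt_pos.2 hpos
        positivity
      have hden : HasDerivAt (fun s' => 2 * Real.sqrt (v s' x))
          (pd1 Fv (s, x) / Real.sqrt (v s x)) s := by
        have h := hsq.const_mul 2
        refine h.congr_deriv ?_
        field_simp
      have hQdd : HasDerivAt (fun s' => Q (s', x)) (Q' (s, x)) s := hnum.div hden h2sqne
      have hsqr : HasDerivAt (fun s' => (Q (s', x))^2) (2 * Q (s, x) * Q' (s, x)) s := by
        simpa using hQdd.fun_pow 2
      exact hsqr.congr_of_eventuallyEq hev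
  have part1 : ∀ t ∈ Set.Icc (0:ℝ) T, ∃ D : ℝ,
      HasDerivAt (fun s =>
          (μ/4) * (∫ x in a..b, (u s x * Real.log (u s x) - u s x + 1))
          + (χ/2) * ∫ x in a..b, (deriv (fun y => Real.sqrt (v s y)) x)^2) D t ∧
      D + μ * (∫ x in a..b, (deriv (fun y => Real.sqrt (u t y)) x)^2)
        + χ * (∫ x in a..b, (deriv (deriv (fun y => Real.sqrt (v t y))) x)^2)
        + (χ/3) * (∫ x in a..b, (deriv (fun y => Real.sqrt (v t y)) x)^4 / v t x)
        + (μ * χ / 2) * (∫ x in a..b, u t x * (deriv (fun y => Real.sqrt (v t y)) x)^2)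
        = 0 := by
    intro t ht
    refine ⟨(μ/4) * (∫ x in a..b, pd1 (fun p : ℝ × ℝ => u p.1 p.2) (t, x) * Real.log (u t x))
        + (χ/2) * (∫ x in a..b, 2 * Q (t, x) * Q' (t, x)),
      ((keyA t ht).const_mul (μ/4)).add ((keyB t ht).const_mul (χ/2)), ?_⟩
    have hU : ContDiff ℝ (⊤ : ℕ∞) (u t) := hu.comp ((contDiff_const (c := t)).prodMk contDiff_id)
    have hV : ContDiff ℝ (⊤ : ℕ∞) (v t) := hv.comp ((contDiff_const (c := t)).prodMk contDiff_id)
    have hUt : ContDiff ℝ (⊤ : ℕ∞) (fun x => pd1 (fun p : ℝ × ℝ => u p.1 p.2) (t, x)) :=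
      (contDiff_pd1 hu).comp ((contDiff_const (c := t)).prodMk contDiff_id)
    have hVt : ContDiff ℝ (⊤ : ℕ∞) (fun x => pd1 Fv (t, x)) :=
      (contDiff_pd1 hv).comp ((contDiff_const (c := t)).prodMk contDiff_id)
    have hpdeU : ∀ x ∈ Set.Icc a b, (fun x => pd1 (fun p : ℝ × ℝ => u p.1 p.2) (t, x)) x
        = deriv (deriv (u t)) x - χ * deriv (fun y => u t y * deriv (v t) y) x := by
      intro x hx
      have hld : deriv (fun s => u s x) t = pd1 (fun p : ℝ × ℝ => u p.1 p.2) (t, x) :=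
        (hasDerivAt_pd1 hu t x).deriv
      simp only
      rw [← hld]
      exact hpde_u t ht x hx
    have hpdeV : ∀ x ∈ Set.Icc a b, (fun x => pd1 Fv (t, x)) x
        = deriv (deriv (v t)) x - μ * u t x * v t x := by
      intro x hx
      have hld : deriv (fun s => v s x) t = pd1 Fv (t, x) := (hasDerivAt_pd1 hv t x).deriv
      simp only
      rw [← hld]
      exact hpde_v t ht x hx
    have ONE := onevar a b χ μ hab (u t) (v t)
      (fun x => pd1 (fun p : ℝ × ℝ => u p.1 p.2) (t, x)) (fun x => pd1 Fv (t, x))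
      hU hV hUt hVt (hupos t ht) (hvpos t ht) (hbc_u t ht) (hbc_v t ht) hpdeU hpdeV
    beta_reduce at ONE
    have hbridge : (∫ x in a..b, 2 * Q (t, x) * Q' (t, x))
        = ∫ x in a..b, 2 * (deriv (v t) x / (2 * Real.sqrt (v t x))) *
            ((deriv (fun x => pd1 Fv (t, x)) x * (2 * Real.sqrt (v t x))
              - deriv (v t) x * (pd1 Fv (t, x) / Real.sqrt (v t x)))
              / (2 * Real.sqrt (v t x))^2) := by
      apply intervalIntegral.integral_congr
      intro x hx
      have e1 : deriv (v t) x = pd2 Fv (t, x) := (hasDerivAt_pd2 hv t x).deriv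
      have e2 : deriv (fun x => pd1 Fv (t, x)) x = pd1 (pd2 Fv) (t, x) := by
        have h1 : deriv (fun x => pd1 Fv (t, x)) x = pd2 (pd1 Fv) (t, x) :=
          (hasDerivAt_pd2 (contDiff_pd1 hv) t x).deriv
        rw [h1, ← pd_comm hv]
      beta_reduce
      simp only [hQdef, hQ'def]
      rw [e1, e2]
    linear_combination ONE + (χ/2) * hbridge
  refine ⟨part1, ?_⟩
  intro s hs t ht hst
  have hmono : AntitoneOn (fun s =>
      (μ/4) * (∫ x in a..b, (u s x * Real.log (u s x) - u s x + 1))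
      + (χ/2) * ∫ x in a..b, (deriv (fun y => Real.sqrt (v s y)) x)^2) (Set.Icc 0 T) := by
    apply antitoneOn_of_deriv_nonpos (convex_Icc 0 T)
    · intro τ hτ
      obtain ⟨D, hD, -⟩ := part1 τ hτ
      exact hD.continuousAt.continuousWithinAt
    · intro τ hτ
      rw [interior_Icc] at hτ
      obtain ⟨D, hD, -⟩ := part1 τ (Set.Ioo_subset_Icc_self hτ)
      exact hD.differentiableAt.differentiableWithinAt
    · intro τ hτ
      rw [interior_Icc] at hτ
      have hτ' := Set.Ioo_subset_Icc_self hτ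
      obtain ⟨D, hD, hid⟩ := part1 τ hτ'
      rw [hD.deriv]
      have h1 : 0 ≤ ∫ x in a..b, (deriv (fun y => Real.sqrt (u τ y)) x)^2 :=
        intervalIntegral.integral_nonneg hab.le (fun x hx => sq_nonneg _)
      have h2 : 0 ≤ ∫ x in a..b, (deriv (deriv (fun y => Real.sqrt (v τ y))) x)^2 :=
        intervalIntegral.integral_nonneg hab.le (fun x hx => sq_nonneg _)
      have h3 : 0 ≤ ∫ x in a..b, (deriv (fun y => Real.sqrt (v τ y)) x)^4 / v τ x :=
        intervalIntegral.integral_nonneg hab.le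
          (fun x hx => div_nonneg (by positivity) (hvpos τ hτ' x hx).le)
      have h4 : 0 ≤ ∫ x in a..b, u τ x * (deriv (fun y => Real.sqrt (v τ y)) x)^2 :=
        intervalIntegral.integral_nonneg hab.le
          (fun x hx => mul_nonneg (hupos τ hτ' x hx).le (sq_nonneg _))
      nlinarith [mul_nonneg hμ.le h1, mul_nonneg hχ.le h2,
        mul_nonneg (by positivity : (0:ℝ) ≤ χ/3) h3,
        mul_nonneg (by positivity : (0:ℝ) ≤ μ*χ/2) h4]
  exact hmono hs ht hst
end

section
/- Gradient (σ-) reformulation of the v-equation: if in addition v(t,x) > 0 for all (t,x) ∈ [0,T] × [a,b], then the function σ := ∂ₓ(√v) satisfies pointwise on [0,T] × [a,b] the equation ∂ₜσ + σ³/v − (2/√v) σ ∂ₓσ − ∂ₓₓσ + (μ/2) u σ + (μ/2) √v ∂ₓu = 0. -/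
open MeasureTheory

/-- Partial derivative in the second (space) variable. -/
noncomputable def pdx (F : ℝ × ℝ → ℝ) : ℝ × ℝ → ℝ := fun p => fderiv ℝ F p (0, 1)

/-- Partial derivative in the first (time) variable. -/
noncomputable def pdt (F : ℝ × ℝ → ℝ) : ℝ × ℝ → ℝ := fun p => fderiv ℝ F p (1, 0)

section Aux

variable {F : ℝ × ℝ → ℝ}

lemma aux_hasDerivAt_snd (hF : ContDiff ℝ ((⊤ : ℕ∞) : WithTop ℕ∞) F) (t x : ℝ) :
    HasDerivAt (fun y => F (t, y)) (pdx F (t, x)) x := by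
  have h1 : HasDerivAt (fun y : ℝ => ((t, y) : ℝ × ℝ)) ((0 : ℝ), (1 : ℝ)) x :=
    (hasDerivAt_const x t).prodMk (hasDerivAt_id x)
  exact ((hF.differentiable (by simp)) (t, x)).hasFDerivAt.comp_hasDerivAt x h1

lemma aux_hasDerivAt_fst (hF : ContDiff ℝ ((⊤ : ℕ∞) : WithTop ℕ∞) F) (t x : ℝ) :
    HasDerivAt (fun s => F (s, x)) (pdt F (t, x)) t := by
  have h1 : HasDerivAt (fun s : ℝ => ((s, x) : ℝ × ℝ)) ((1 : ℝ), (0 : ℝ)) t :=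
    (hasDerivAt_id t).prodMk (hasDerivAt_const t x)
  exact ((hF.differentiable (by simp)) (t, x)).hasFDerivAt.comp_hasDerivAt t h1

lemma aux_contDiff_pdx (hF : ContDiff ℝ ((⊤ : ℕ∞) : WithTop ℕ∞) F) :
    ContDiff ℝ ((⊤ : ℕ∞) : WithTop ℕ∞) (pdx F) := by
  unfold pdx
  exact (hF.fderiv_right (m := (⊤ : ℕ∞)) (by simp)).clm_apply contDiff_const

lemma aux_contDiff_pdt (hF : ContDiff ℝ ((⊤ : ℕ∞) : WithTop ℕ∞) F) :
    ContDiff ℝ ((⊤ : ℕ∞) : WithTop ℕ∞) (pdt F) := by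
  unfold pdt
  exact (hF.fderiv_right (m := (⊤ : ℕ∞)) (by simp)).clm_apply contDiff_const

lemma aux_swap (hF : ContDiff ℝ ((⊤ : ℕ∞) : WithTop ℕ∞) F) (t x : ℝ) :
    pdt (pdx F) (t, x) = pdx (pdt F) (t, x) := by
  have hd : DifferentiableAt ℝ (fderiv ℝ F) (t, x) :=
    ((hF.fderiv_right (m := (⊤ : ℕ∞)) (by simp)).differentiable (by simp)) (t, x)
  have h1 : fderiv ℝ (fun p : ℝ × ℝ => fderiv ℝ F p ((0 : ℝ), (1 : ℝ))) (t, x)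
      = (fderiv ℝ (fderiv ℝ F) (t, x)).flip (0, 1) := by
    rw [fderiv_clm_apply hd (differentiableAt_const _)]
    simp
  have h2 : fderiv ℝ (fun p : ℝ × ℝ => fderiv ℝ F p ((1 : ℝ), (0 : ℝ))) (t, x)
      = (fderiv ℝ (fderiv ℝ F) (t, x)).flip (1, 0) := by
    rw [fderiv_clm_apply hd (differentiableAt_const _)]
    simp
  show fderiv ℝ (pdx F) (t, x) (1, 0) = fderiv ℝ (pdt F) (t, x) (0, 1)
  unfold pdx pdt
  rw [h1, h2]
  exact (hF.contDiffAt.isSymmSndFDerivAt (by rw [minSmoothness_of_isRCLikeNormedField]; norm_cast)) _ _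

end Aux

set_option maxHeartbeats 1600000 in
/-- Gradient (σ-) reformulation of the v-equation: if v > 0, then σ := ∂ₓ√v
satisfies ∂ₜσ + σ³/v − (2/√v)σ∂ₓσ − ∂ₓₓσ + (μ/2)uσ + (μ/2)√v ∂ₓu = 0 pointwise. -/
theorem sigma_reformulation_v
    (a b T χ μ : ℝ) (hab : a < b) (hT : 0 < T) (hχ : 0 < χ) (hμ : 0 < μ)
    (u v : ℝ → ℝ → ℝ)
    (hu : ContDiff ℝ (⊤ : ℕ∞) (fun p : ℝ × ℝ => u p.1 p.2))
    (hv : ContDiff ℝ (⊤ : ℕ∞) (fun p : ℝ × ℝ => v p.1 p.2))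
    (hpde_u : ∀ t ∈ Set.Icc (0:ℝ) T, ∀ x ∈ Set.Icc a b,
      deriv (fun s => u s x) t
        = deriv (deriv (u t)) x - χ * deriv (fun y => u t y * deriv (v t) y) x)
    (hpde_v : ∀ t ∈ Set.Icc (0:ℝ) T, ∀ x ∈ Set.Icc a b,
      deriv (fun s => v s x) t
        = deriv (deriv (v t)) x - μ * u t x * v t x)
    (hbc_u : ∀ t ∈ Set.Icc (0:ℝ) T, deriv (u t) a = 0 ∧ deriv (u t) b = 0)
    (hbc_v : ∀ t ∈ Set.Icc (0:ℝ) T, deriv (v t) a = 0 ∧ deriv (v t) b = 0)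
    (hvpos : ∀ t ∈ Set.Icc (0:ℝ) T, ∀ x ∈ Set.Icc a b, 0 < v t x) :
    ∀ t ∈ Set.Icc (0:ℝ) T, ∀ x ∈ Set.Icc a b,
      deriv (fun s => deriv (fun y => Real.sqrt (v s y)) x) t
        + (deriv (fun y => Real.sqrt (v t y)) x)^3 / v t x
        - (2 / Real.sqrt (v t x)) * (deriv (fun y => Real.sqrt (v t y)) x)
            * (deriv (deriv (fun y => Real.sqrt (v t y))) x)
        - deriv (deriv (deriv (fun y => Real.sqrt (v t y)))) x
        + (μ/2) * u t x * deriv (fun y => Real.sqrt (v t y)) x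
        + (μ/2) * Real.sqrt (v t x) * deriv (u t) x = 0 := by
  intro t ht x hx
  have hv' : ContDiff ℝ ((⊤ : ℕ∞) : WithTop ℕ∞) (fun p : ℝ × ℝ => v p.1 p.2) := hv
  have hu' : ContDiff ℝ ((⊤ : ℕ∞) : WithTop ℕ∞) (fun p : ℝ × ℝ => u p.1 p.2) := hu
  have hF2 : ContDiff ℝ ((⊤ : ℕ∞) : WithTop ℕ∞) (pdx (fun p : ℝ × ℝ => v p.1 p.2)) :=
    aux_contDiff_pdx hv'
  have hF3 : ContDiff ℝ ((⊤ : ℕ∞) : WithTop ℕ∞)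
      (pdx (pdx (fun p : ℝ × ℝ => v p.1 p.2))) := aux_contDiff_pdx hF2
  have hF1 : ContDiff ℝ ((⊤ : ℕ∞) : WithTop ℕ∞) (pdt (fun p : ℝ × ℝ => v p.1 p.2)) :=
    aux_contDiff_pdt hv'
  -- positivity at the point
  have hc : 0 < v t x := hvpos t ht x hx
  have hcne : v t x ≠ 0 := ne_of_gt hc
  have hw : 0 < Real.sqrt (v t x) := Real.sqrt_pos.2 hc
  have hwne : Real.sqrt (v t x) ≠ 0 := ne_of_gt hw
  -- σ-formula on the positivity set
  have sig_eq : ∀ s y, 0 < v s y →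
      deriv (fun y' => Real.sqrt (v s y')) y
        = pdx (fun p : ℝ × ℝ => v p.1 p.2) (s, y) / (2 * Real.sqrt (v s y)) := by
    intro s y hpos
    have h1 : HasDerivAt (fun y' => v s y')
        (pdx (fun p : ℝ × ℝ => v p.1 p.2) (s, y)) y := aux_hasDerivAt_snd hv' s y
    exact (h1.sqrt (ne_of_gt hpos)).deriv
  -- spatial derivative of the σ-formula (the function H)
  have hH : ∀ s y, 0 < v s y →
      HasDerivAt (fun y' => pdx (fun p : ℝ × ℝ => v p.1 p.2) (s, y')
          / (2 * Real.sqrt (v s y')))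
        (pdx (pdx (fun p : ℝ × ℝ => v p.1 p.2)) (s, y) / (2 * Real.sqrt (v s y))
          - pdx (fun p : ℝ × ℝ => v p.1 p.2) (s, y) ^ 2
              / (4 * v s y * Real.sqrt (v s y))) y := by
    intro s y hpos
    have hwy : 0 < Real.sqrt (v s y) := Real.sqrt_pos.2 hpos
    have hnum : HasDerivAt (fun y' => pdx (fun p : ℝ × ℝ => v p.1 p.2) (s, y'))
        (pdx (pdx (fun p : ℝ × ℝ => v p.1 p.2)) (s, y)) y := aux_hasDerivAt_snd hF2 s y
    have hvy : HasDerivAt (fun y' => v s y')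
        (pdx (fun p : ℝ × ℝ => v p.1 p.2) (s, y)) y := aux_hasDerivAt_snd hv' s y
    have hden : HasDerivAt (fun y' => 2 * Real.sqrt (v s y'))
        (2 * (pdx (fun p : ℝ × ℝ => v p.1 p.2) (s, y) / (2 * Real.sqrt (v s y)))) y :=
      (hvy.sqrt (ne_of_gt hpos)).const_mul 2
    have hd := hnum.div hden (by positivity)
    refine hd.congr_deriv ?_
    have hsq' : v s y = Real.sqrt (v s y) ^ 2 := (Real.sq_sqrt hpos.le).symm
    have hWne : Real.sqrt (v s y) ≠ 0 := ne_of_gt hwy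
    generalize hgW : Real.sqrt (v s y) = W at hsq' hWne ⊢
    rw [hsq']
    field_simp
    ring
  -- open positivity sets
  have hcontx : Continuous (fun y => v t y) :=
    hv'.continuous.comp (continuous_const.prodMk continuous_id)
  have hOopen : IsOpen {y : ℝ | 0 < v t y} := isOpen_lt continuous_const hcontx
  have hOx : {y : ℝ | 0 < v t y} ∈ nhds x := hOopen.mem_nhds hc
  -- first spatial derivative
  have Eq0 : deriv (fun y => Real.sqrt (v t y)) x
      = pdx (fun p : ℝ × ℝ => v p.1 p.2) (t, x) / (2 * Real.sqrt (v t x)) :=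
    sig_eq t x hc
  -- second spatial derivative
  have hEv1 : deriv (fun y => Real.sqrt (v t y)) =ᶠ[nhds x]
      fun y => pdx (fun p : ℝ × ℝ => v p.1 p.2) (t, y) / (2 * Real.sqrt (v t y)) :=
    Filter.eventuallyEq_of_mem hOx fun y hy => sig_eq t y hy
  have Eq1 := hEv1.deriv_eq.trans (hH t x hc).deriv
  -- third spatial derivative
  have hEv2 : deriv (deriv (fun y => Real.sqrt (v t y))) =ᶠ[nhds x]
      fun y => pdx (pdx (fun p : ℝ × ℝ => v p.1 p.2)) (t, y) / (2 * Real.sqrt (v t y))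
        - pdx (fun p : ℝ × ℝ => v p.1 p.2) (t, y) ^ 2
            / (4 * v t y * Real.sqrt (v t y)) := by
    refine Filter.eventuallyEq_of_mem hOx fun y hy => ?_
    have hEvy : deriv (fun y' => Real.sqrt (v t y')) =ᶠ[nhds y]
        fun y' => pdx (fun p : ℝ × ℝ => v p.1 p.2) (t, y') / (2 * Real.sqrt (v t y')) :=
      Filter.eventuallyEq_of_mem (hOopen.mem_nhds hy) fun z hz => sig_eq t z hz
    exact hEvy.deriv_eq.trans (hH t y hy).deriv
  have hr3 : HasDerivAt (fun y => pdx (pdx (fun p : ℝ × ℝ => v p.1 p.2)) (t, y))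
      (pdx (pdx (pdx (fun p : ℝ × ℝ => v p.1 p.2))) (t, x)) x :=
    aux_hasDerivAt_snd hF3 t x
  have hvx : HasDerivAt (fun y => v t y)
      (pdx (fun p : ℝ × ℝ => v p.1 p.2) (t, x)) x := aux_hasDerivAt_snd hv' t x
  have hsq : HasDerivAt (fun y => Real.sqrt (v t y))
      (pdx (fun p : ℝ × ℝ => v p.1 p.2) (t, x) / (2 * Real.sqrt (v t x))) x :=
    hvx.sqrt hcne
  have hdenA : HasDerivAt (fun y => 2 * Real.sqrt (v t y))
      (2 * (pdx (fun p : ℝ × ℝ => v p.1 p.2) (t, x) / (2 * Real.sqrt (v t x)))) x :=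
    hsq.const_mul 2
  have hA := hr3.div hdenA (by positivity)
  have hf2x : HasDerivAt (fun y => pdx (fun p : ℝ × ℝ => v p.1 p.2) (t, y))
      (pdx (pdx (fun p : ℝ × ℝ => v p.1 p.2)) (t, x)) x := aux_hasDerivAt_snd hF2 t x
  have hnumB := hf2x.pow 2
  have hdenB : HasDerivAt (fun y => 4 * v t y * Real.sqrt (v t y))
      (4 * pdx (fun p : ℝ × ℝ => v p.1 p.2) (t, x) * Real.sqrt (v t x)
        + 4 * v t x * (pdx (fun p : ℝ × ℝ => v p.1 p.2) (t, x)
            / (2 * Real.sqrt (v t x)))) x :=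
    (hvx.const_mul 4).mul hsq
  have hB := hnumB.div hdenB (by positivity)
  have hHx := hA.sub hB
  have Eq2 := hEv2.deriv_eq.trans hHx.deriv
  -- time derivative
  have hcontt : Continuous (fun s => v s x) :=
    hv'.continuous.comp (continuous_id.prodMk continuous_const)
  have hOt : ∀ᶠ s in nhds t, 0 < v s x :=
    (hcontt.continuousAt (x := t) : Filter.Tendsto _ _ _).eventually (eventually_gt_nhds hc)
  have hEvT : (fun s => deriv (fun y => Real.sqrt (v s y)) x) =ᶠ[nhds t]
      fun s => pdx (fun p : ℝ × ℝ => v p.1 p.2) (s, x) / (2 * Real.sqrt (v s x)) :=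
    hOt.mono fun s hs => sig_eq s x hs
  have hnumT : HasDerivAt (fun s => pdx (fun p : ℝ × ℝ => v p.1 p.2) (s, x))
      (pdt (pdx (fun p : ℝ × ℝ => v p.1 p.2)) (t, x)) t := aux_hasDerivAt_fst hF2 t x
  have hvt : HasDerivAt (fun s => v s x)
      (pdt (fun p : ℝ × ℝ => v p.1 p.2) (t, x)) t := aux_hasDerivAt_fst hv' t x
  have hdenT : HasDerivAt (fun s => 2 * Real.sqrt (v s x))
      (2 * (pdt (fun p : ℝ × ℝ => v p.1 p.2) (t, x) / (2 * Real.sqrt (v t x)))) t :=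
    (hvt.sqrt hcne).const_mul 2
  have hGt := hnumT.div hdenT (by positivity)
  have EqT := hEvT.deriv_eq.trans hGt.deriv
  -- rewriting the PDE at points of the rectangle
  have hderivvt : deriv (v t) = fun y => pdx (fun p : ℝ × ℝ => v p.1 p.2) (t, y) := by
    funext y
    exact (aux_hasDerivAt_snd hv' t y).deriv
  have hPDEx : pdt (fun p : ℝ × ℝ => v p.1 p.2) (t, x)
      = pdx (pdx (fun p : ℝ × ℝ => v p.1 p.2)) (t, x) - μ * u t x * v t x := by
    have h0 := hpde_v t ht x hx
    have h1 : deriv (fun s => v s x) t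
        = pdt (fun p : ℝ × ℝ => v p.1 p.2) (t, x) := hvt.deriv
    have h2 : deriv (deriv (v t)) x
        = pdx (pdx (fun p : ℝ × ℝ => v p.1 p.2)) (t, x) := by
      rw [hderivvt]; exact (aux_hasDerivAt_snd hF2 t x).deriv
    rw [h1, h2] at h0
    exact h0
  have hderivu : deriv (u t) x = pdx (fun p : ℝ × ℝ => u p.1 p.2) (t, x) :=
    (aux_hasDerivAt_snd hu' t x).deriv
  -- mixed derivative via Clairaut and the PDE
  have hm : pdt (pdx (fun p : ℝ × ℝ => v p.1 p.2)) (t, x)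
      = pdx (pdx (pdx (fun p : ℝ × ℝ => v p.1 p.2))) (t, x)
        - μ * (pdx (fun p : ℝ × ℝ => u p.1 p.2) (t, x) * v t x
            + u t x * pdx (fun p : ℝ × ℝ => v p.1 p.2) (t, x)) := by
    have hswap := aux_swap hv' t x
    have hf : HasDerivAt (fun y => pdt (fun p : ℝ × ℝ => v p.1 p.2) (t, y))
        (pdx (pdt (fun p : ℝ × ℝ => v p.1 p.2)) (t, x)) x := aux_hasDerivAt_snd hF1 t x
    have hux : HasDerivAt (fun y => u t y)
        (pdx (fun p : ℝ × ℝ => u p.1 p.2) (t, x)) x := aux_hasDerivAt_snd hu' t x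
    have hg : HasDerivAt
        (fun y => pdx (pdx (fun p : ℝ × ℝ => v p.1 p.2)) (t, y) - μ * (u t y * v t y))
        (pdx (pdx (pdx (fun p : ℝ × ℝ => v p.1 p.2))) (t, x)
          - μ * (pdx (fun p : ℝ × ℝ => u p.1 p.2) (t, x) * v t x
              + u t x * pdx (fun p : ℝ × ℝ => v p.1 p.2) (t, x))) x :=
      hr3.sub ((hux.mul hvx).const_mul μ)
    have heqset : ∀ y ∈ Set.Icc a b,
        pdt (fun p : ℝ × ℝ => v p.1 p.2) (t, y)
          = pdx (pdx (fun p : ℝ × ℝ => v p.1 p.2)) (t, y) - μ * (u t y * v t y) := by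
      intro y hy
      have h0 := hpde_v t ht y hy
      have h1 : deriv (fun s => v s y) t
          = pdt (fun p : ℝ × ℝ => v p.1 p.2) (t, y) := (aux_hasDerivAt_fst hv' t y).deriv
      have h2 : deriv (deriv (v t)) y
          = pdx (pdx (fun p : ℝ × ℝ => v p.1 p.2)) (t, y) := by
        rw [hderivvt]; exact (aux_hasDerivAt_snd hF2 t y).deriv
      rw [h1, h2] at h0
      rw [h0]; ring
    have hud : UniqueDiffWithinAt ℝ (Set.Icc a b) x := uniqueDiffOn_Icc hab x hx
    have hfw := hf.hasDerivWithinAt (s := Set.Icc a b)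
    have hgw := (hg.hasDerivWithinAt (s := Set.Icc a b)).congr heqset (heqset x hx)
    have := (hfw.derivWithin hud).symm.trans (hgw.derivWithin hud)
    rw [hswap, this]
  -- put everything together
  rw [EqT, Eq2, Eq1, Eq0, hderivu, hPDEx, hm]
  have hW2 : v t x = Real.sqrt (v t x) ^ 2 := (Real.sq_sqrt hc.le).symm
  generalize hg : Real.sqrt (v t x) = W at hW2 hwne ⊢
  rw [hW2]
  push_cast [Pi.pow_apply]
  field_simp
  ring
end

section
/- Energy dissipation law for the reformulated (u,v,σ) system in one dimension (Corollary of Theorem 2.1): for every t ∈ [0,T], (d/dt)[ (μ/4) ∫ₐᵇ (u log u − u + 1) dx + (χ/2) ∫ₐᵇ σ² dx ] + (μ/4) ∫ₐᵇ (∂ₓu)²/u dx + χ ∫ₐᵇ (∂ₓσ)² dx + (χ/3) ∫ₐᵇ σ⁴/v dx + (χμ/2) ∫ₐᵇ u σ² dx = 0. In particular the energy E(u,σ) = (μ/4)∫ₐᵇ(u log u − u + 1)dx + (χ/2)∫ₐᵇσ²dx is non-increasing in time. -/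
open MeasureTheory

section EnergyDissAux
open MeasureTheory Set intervalIntegral
open scoped ContDiff

namespace EnergyDiss

lemma hasDerivAt_slice1 {f : ℝ → ℝ → ℝ} (hf : ContDiff ℝ (⊤ : ℕ∞) (fun p : ℝ × ℝ => f p.1 p.2))
    (s x : ℝ) :
    HasDerivAt (fun s' => f s' x)
      (fderiv ℝ (fun p : ℝ × ℝ => f p.1 p.2) (s, x) (1, 0)) s := by
  have h := (hf.differentiable (by simp) (s, x)).hasFDerivAt
  have hline : HasDerivAt (fun s' : ℝ => ((s' : ℝ), x)) ((1 : ℝ), (0 : ℝ)) s :=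
    (hasDerivAt_id s).prodMk (hasDerivAt_const s x)
  exact h.comp_hasDerivAt s hline

lemma continuous_pderiv1 {f : ℝ → ℝ → ℝ} (hf : ContDiff ℝ (⊤ : ℕ∞) (fun p : ℝ × ℝ => f p.1 p.2)) :
    Continuous (fun p : ℝ × ℝ => fderiv ℝ (fun p : ℝ × ℝ => f p.1 p.2) p ((1 : ℝ), (0 : ℝ))) :=
  (hf.continuous_fderiv (by simp)).clm_apply continuous_const

lemma contDiff_slice2 {f : ℝ → ℝ → ℝ} (hf : ContDiff ℝ (⊤ : ℕ∞) (fun p : ℝ × ℝ => f p.1 p.2))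
    (t : ℝ) : ContDiff ℝ (⊤ : ℕ∞) (f t) :=
  hf.comp (contDiff_const.prodMk contDiff_id)

lemma tube_pos {f : ℝ → ℝ → ℝ} (hf : Continuous (fun p : ℝ × ℝ => f p.1 p.2)) {t a b : ℝ}
    (h : ∀ x ∈ Icc a b, 0 < f t x) :
    ∃ ε > 0, ∀ s ∈ Metric.ball t ε, ∀ x ∈ Icc a b, 0 < f s x := by
  obtain ⟨U, V, hU, _, htU, hKV, hsub⟩ :=
    generalized_tube_lemma isCompact_singleton isCompact_Icc
      (isOpen_Ioi.preimage hf) (n := (fun p : ℝ × ℝ => f p.1 p.2) ⁻¹' Ioi 0)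
      (by
        rintro ⟨s, x⟩ ⟨hs, hx⟩
        simp only [mem_singleton_iff] at hs
        subst hs
        exact h x hx)
  obtain ⟨ε, hε, hball⟩ := Metric.isOpen_iff.1 hU t (htU rfl)
  exact ⟨ε, hε, fun s hs x hx => hsub (Set.mk_mem_prod (hball hs) (hKV hx))⟩

lemma hasDerivAt_int {g g' : ℝ → ℝ → ℝ} {a b t ε : ℝ} (hab : a ≤ b) (hε : 0 < ε)
    (hmeas : ∀ s, AEStronglyMeasurable (g s) (volume.restrict (Set.uIoc a b)))
    (hint : IntervalIntegrable (g t) volume a b)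
    (hder : ∀ x ∈ Set.Icc a b, ∀ s ∈ Metric.ball t ε, HasDerivAt (fun s' => g s' x) (g' s x) s)
    (hcont : ContinuousOn (fun p : ℝ × ℝ => g' p.1 p.2)
      (Set.Icc (t - ε) (t + ε) ×ˢ Set.Icc a b)) :
    HasDerivAt (fun s => ∫ x in a..b, g s x) (∫ x in a..b, g' t x) t := by
  obtain ⟨C, hC⟩ := (isCompact_Icc.prod isCompact_Icc).exists_bound_of_continuousOn hcont
  have hsub : Set.uIoc a b ⊆ Set.Icc a b := by
    rw [Set.uIoc_of_le hab]; exact Set.Ioc_subset_Icc_self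
  have htm : t ∈ Icc (t - ε) (t + ε) := ⟨by linarith, by linarith⟩
  have hballsub : Metric.ball t ε ⊆ Icc (t - ε) (t + ε) := by
    rw [Real.ball_eq_Ioo]; exact Ioo_subset_Icc_self
  have hmeas' : AEStronglyMeasurable (g' t) (volume.restrict (Set.uIoc a b)) := by
    have hco : ContinuousOn (g' t) (Icc a b) := by
      have : ContinuousOn (fun x => (fun p : ℝ × ℝ => g' p.1 p.2) (t, x)) (Icc a b) :=
        hcont.comp (continuous_const.prodMk continuous_id).continuousOn
          (fun x hx => ⟨htm, hx⟩)
      exact this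
    exact (hco.aestronglyMeasurable measurableSet_Icc).mono_measure
      (Measure.restrict_mono hsub le_rfl)
  refine (intervalIntegral.hasDerivAt_integral_of_dominated_loc_of_deriv_le (bound := fun _ => C)
    (Metric.ball_mem_nhds t hε) (Filter.Eventually.of_forall hmeas) hint hmeas' ?_ intervalIntegrable_const ?_).2
  · exact Filter.Eventually.of_forall fun x hx s hs =>
      hC (s, x) ⟨hballsub hs, hsub hx⟩
  · exact Filter.Eventually.of_forall fun x hx s hs => hder x (hsub hx) s hs


lemma key_identity {a b χ μ : ℝ} (hab : a < b)
    (f w g ft gt : ℝ → ℝ)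
    (hf : ContDiff ℝ (⊤ : ℕ∞) f) (hw : ContDiff ℝ (⊤ : ℕ∞) w) (hg : ContDiff ℝ (⊤ : ℕ∞) g)
    (hfpos : ∀ x ∈ Icc a b, 0 < f x) (hwpos : ∀ x ∈ Icc a b, 0 < w x)
    (hft : ∀ x ∈ Icc a b, ft x = deriv (deriv f) x
      - 2 * χ * deriv (fun y => f y * Real.sqrt (w y) * g y) x)
    (hgt : ∀ x ∈ Icc a b, gt x = (2 / Real.sqrt (w x)) * g x * deriv g x
      - (1 / (3 * w x)) * g x ^ 3
      - (2 / (3 * w x)) * g x ^ 2 * deriv (fun y => Real.sqrt (w y)) x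
      + deriv (deriv g) x - (μ/2) * f x * g x - (μ/2) * Real.sqrt (w x) * deriv f x)
    (hbfa : deriv f a = 0) (hbfb : deriv f b = 0)
    (hbga : g a = 0) (hbgb : g b = 0) :
    (μ/4) * (∫ x in a..b, ft x * Real.log (f x))
      + (χ/2) * (∫ x in a..b, 2 * g x * gt x)
      + (μ/4) * (∫ x in a..b, (deriv f x)^2 / f x)
      + χ * (∫ x in a..b, (deriv g x)^2)
      + (χ/3) * (∫ x in a..b, g x ^ 4 / w x)
      + (χ * μ / 2) * (∫ x in a..b, f x * g x ^ 2) = 0 := by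
  have hIcc : uIcc a b = Icc a b := uIcc_of_le hab.le
  have II : ∀ h : ℝ → ℝ, ContinuousOn h (Icc a b) → IntervalIntegrable h volume a b :=
    fun h hh => ContinuousOn.intervalIntegrable (by rw [hIcc]; exact hh)
  have hfc : Continuous f := hf.continuous
  have hwc : Continuous w := hw.continuous
  have hgc : Continuous g := hg.continuous
  have hfd : ContDiff ℝ ∞ (deriv f) := (contDiff_infty_iff_deriv.mp (hf.of_le (by simp))).2
  have hgd : ContDiff ℝ ∞ (deriv g) := (contDiff_infty_iff_deriv.mp (hg.of_le (by simp))).2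
  have hfxc : Continuous (deriv f) := hfd.continuous
  have hgxc : Continuous (deriv g) := hgd.continuous
  have hwxc : Continuous (deriv w) :=
    ((contDiff_infty_iff_deriv.mp (hw.of_le (by simp))).2).continuous
  have hfxxc : Continuous (deriv (deriv f)) := (contDiff_infty_iff_deriv.mp hfd).2.continuous
  have hgxxc : Continuous (deriv (deriv g)) := (contDiff_infty_iff_deriv.mp hgd).2.continuous
  have hswc : Continuous (fun x => Real.sqrt (w x)) := Real.continuous_sqrt.comp hwc
  have hfx : ∀ x, HasDerivAt f (deriv f x) x := fun x => (hf.differentiable (by simp) x).hasDerivAt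
  have hgx : ∀ x, HasDerivAt g (deriv g x) x := fun x => (hg.differentiable (by simp) x).hasDerivAt
  have hwx : ∀ x, HasDerivAt w (deriv w x) x := fun x => (hw.differentiable (by simp) x).hasDerivAt
  have hfxx : ∀ x, HasDerivAt (deriv f) (deriv (deriv f) x) x :=
    fun x => (hfd.differentiable (by simp) x).hasDerivAt
  have hgxx : ∀ x, HasDerivAt (deriv g) (deriv (deriv g) x) x :=
    fun x => (hgd.differentiable (by simp) x).hasDerivAt
  have hfne : ∀ x ∈ Icc a b, f x ≠ 0 := fun x hx => (hfpos x hx).ne'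
  have hwne : ∀ x ∈ Icc a b, w x ≠ 0 := fun x hx => (hwpos x hx).ne'
  have hswpos : ∀ x ∈ Icc a b, 0 < Real.sqrt (w x) := fun x hx => Real.sqrt_pos.2 (hwpos x hx)
  have hswne : ∀ x ∈ Icc a b, Real.sqrt (w x) ≠ 0 := fun x hx => (hswpos x hx).ne'
  have hsw : ∀ x ∈ Icc a b,
      HasDerivAt (fun y => Real.sqrt (w y)) (deriv w x / (2 * Real.sqrt (w x))) x :=
    fun x hx => (hwx x).sqrt (hwne x hx)
  have hisw : ∀ x ∈ Icc a b,
      HasDerivAt (fun y => (Real.sqrt (w y))⁻¹)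
        (-(deriv w x / (2 * Real.sqrt (w x)) / w x)) x := by
    intro x hx
    have h := (hsw x hx).inv (hswne x hx)
    rw [Real.sq_sqrt (hwpos x hx).le] at h
    exact h.congr_deriv (by ring)
  have hlog : ∀ x ∈ Icc a b, HasDerivAt (fun y => Real.log (f y)) (deriv f x / f x) x :=
    fun x hx => (hfx x).log (hfne x hx)
  have hP : ∀ x ∈ Icc a b, HasDerivAt (fun y => f y * Real.sqrt (w y) * g y)
      ((deriv f x * Real.sqrt (w x) + f x * (deriv w x / (2 * Real.sqrt (w x)))) * g x
        + f x * Real.sqrt (w x) * deriv g x) x :=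
    fun x hx => ((hfx x).mul (hsw x hx)).mul (hgx x)
  have hg3 : ∀ x, HasDerivAt (fun y => g y ^ 3) (3 * g x ^ 2 * deriv g x) x := by
    intro x
    exact ((hgx x).pow 3).congr_deriv (by norm_num)
  -- continuity on Icc
  have hlogc : ContinuousOn (fun x => Real.log (f x)) (Icc a b) :=
    ContinuousOn.log hfc.continuousOn hfne
  have hswinvc : ContinuousOn (fun x => (Real.sqrt (w x))⁻¹) (Icc a b) :=
    hswc.continuousOn.inv₀ hswne
  have h2swne : ∀ x ∈ Icc a b, (2 : ℝ) * Real.sqrt (w x) ≠ 0 :=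
    fun x hx => mul_ne_zero two_ne_zero (hswne x hx)
  have hswxc : ContinuousOn (fun x => deriv w x / (2 * Real.sqrt (w x))) (Icc a b) :=
    hwxc.continuousOn.div (continuous_const.mul hswc).continuousOn h2swne
  have hiswxc : ContinuousOn (fun x => -(deriv w x / (2 * Real.sqrt (w x)) / w x)) (Icc a b) :=
    (hswxc.div hwc.continuousOn hwne).neg
  have hP'c : ContinuousOn (fun x =>
      (deriv f x * Real.sqrt (w x) + f x * (deriv w x / (2 * Real.sqrt (w x)))) * g x
        + f x * Real.sqrt (w x) * deriv g x) (Icc a b) :=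
    (((hfxc.continuousOn.mul hswc.continuousOn).add
      (hfc.continuousOn.mul hswxc)).mul hgc.continuousOn).add
      (((hfc.continuousOn.mul hswc.continuousOn)).mul hgxc.continuousOn)
  have hfxfc : ContinuousOn (fun x => deriv f x / f x) (Icc a b) :=
    hfxc.continuousOn.div hfc.continuousOn hfne
  -- IBP 1
  have hIBP1 : (∫ x in a..b, (deriv (deriv f) x * Real.log (f x) + deriv f x * (deriv f x / f x)))
      = deriv f b * Real.log (f b) - deriv f a * Real.log (f a) :=
    integral_deriv_mul_eq_sub (fun x _ => hfxx x) (fun x hx => hlog x (hIcc ▸ hx))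
      (II _ hfxxc.continuousOn) (II _ hfxfc)
  rw [hbfa, hbfb] at hIBP1
  norm_num at hIBP1
  have hI1 : ∫ x in a..b, deriv (deriv f) x * Real.log (f x)
      = -∫ x in a..b, (deriv f x)^2 / f x := by
    have h1 := II _ (hfxxc.continuousOn.mul hlogc)
    have h2 := II _ (hfxc.continuousOn.mul hfxfc)
    have hsplit : (∫ x in a..b, deriv (deriv f) x * Real.log (f x))
        + (∫ x in a..b, deriv f x * (deriv f x / f x)) = 0 := by
      exact (integral_add h1 h2).symm.trans hIBP1
    have hcg : ∫ x in a..b, deriv f x * (deriv f x / f x)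
        = ∫ x in a..b, (deriv f x)^2 / f x :=
      integral_congr (fun x _ => by rw [sq]; ring)
    linarith
  -- IBP 2
  have hIBP2 : (∫ x in a..b, ((deriv f x / f x) * (f x * Real.sqrt (w x) * g x)
        + Real.log (f x) * ((deriv f x * Real.sqrt (w x)
          + f x * (deriv w x / (2 * Real.sqrt (w x)))) * g x
          + f x * Real.sqrt (w x) * deriv g x)))
      = Real.log (f b) * (f b * Real.sqrt (w b) * g b)
        - Real.log (f a) * (f a * Real.sqrt (w a) * g a) :=
    integral_deriv_mul_eq_sub (fun x hx => hlog x (hIcc ▸ hx)) (fun x hx => hP x (hIcc ▸ hx))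
      (II _ hfxfc) (II _ hP'c)
  rw [hbga, hbgb] at hIBP2
  norm_num at hIBP2
  have hI2 : ∫ x in a..b, ((deriv f x * Real.sqrt (w x)
        + f x * (deriv w x / (2 * Real.sqrt (w x)))) * g x
        + f x * Real.sqrt (w x) * deriv g x) * Real.log (f x)
      = -∫ x in a..b, Real.sqrt (w x) * deriv f x * g x := by
    have h1 := II _ (hfxfc.mul (((hfc.continuousOn.mul hswc.continuousOn)).mul hgc.continuousOn))
    have h2 := II _ (hlogc.mul hP'c)
    have hsplit : (∫ x in a..b, (deriv f x / f x) * (f x * Real.sqrt (w x) * g x))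
        + (∫ x in a..b, Real.log (f x) * ((deriv f x * Real.sqrt (w x)
          + f x * (deriv w x / (2 * Real.sqrt (w x)))) * g x
          + f x * Real.sqrt (w x) * deriv g x)) = 0 := by
      exact (integral_add h1 h2).symm.trans hIBP2
    have hcg1 : ∫ x in a..b, (deriv f x / f x) * (f x * Real.sqrt (w x) * g x)
        = ∫ x in a..b, Real.sqrt (w x) * deriv f x * g x := by
      apply integral_congr
      intro x hx
      have h0 := hfne x (hIcc ▸ hx)
      field_simp
    have hcg2 : (∫ x in a..b, Real.log (f x) * ((deriv f x * Real.sqrt (w x)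
          + f x * (deriv w x / (2 * Real.sqrt (w x)))) * g x
          + f x * Real.sqrt (w x) * deriv g x))
        = ∫ x in a..b, ((deriv f x * Real.sqrt (w x)
          + f x * (deriv w x / (2 * Real.sqrt (w x)))) * g x
          + f x * Real.sqrt (w x) * deriv g x) * Real.log (f x) :=
      integral_congr (fun x _ => mul_comm _ _)
    linarith
  -- E1
  have hE1 : ∫ x in a..b, ft x * Real.log (f x)
      = -(∫ x in a..b, (deriv f x)^2 / f x)
        + 2 * χ * (∫ x in a..b, Real.sqrt (w x) * deriv f x * g x) := by
    have hcg : ∫ x in a..b, ft x * Real.log (f x)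
        = ∫ x in a..b, (deriv (deriv f) x * Real.log (f x)
          - 2 * χ * (((deriv f x * Real.sqrt (w x)
            + f x * (deriv w x / (2 * Real.sqrt (w x)))) * g x
            + f x * Real.sqrt (w x) * deriv g x) * Real.log (f x))) := by
      apply integral_congr
      intro x hx
      have hx' : x ∈ Icc a b := hIcc ▸ hx
      dsimp only
      rw [hft x hx', (hP x hx').deriv]
      ring
    rw [hcg, integral_sub (II (fun x => deriv (deriv f) x * Real.log (f x)) (hfxxc.continuousOn.mul hlogc))
      ((II (fun x => ((deriv f x * Real.sqrt (w x)
            + f x * (deriv w x / (2 * Real.sqrt (w x)))) * g x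
            + f x * Real.sqrt (w x) * deriv g x) * Real.log (f x)) (hP'c.mul hlogc)).const_mul (2 * χ)), intervalIntegral.integral_const_mul, hI1, hI2]
    ring
  -- IBP 3
  have hIBP3 : (∫ x in a..b, (3 * g x ^ 2 * deriv g x * (Real.sqrt (w x))⁻¹
        + g x ^ 3 * (-(deriv w x / (2 * Real.sqrt (w x)) / w x))))
      = g b ^ 3 * (Real.sqrt (w b))⁻¹ - g a ^ 3 * (Real.sqrt (w a))⁻¹ :=
    integral_deriv_mul_eq_sub (fun x _ => hg3 x) (fun x hx => hisw x (hIcc ▸ hx))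
      (II _ ((continuous_const.mul (hgc.pow 2)).mul hgxc).continuousOn)
      (II _ hiswxc)
  have hQ0 : (∫ x in a..b, (3 * g x ^ 2 * deriv g x * (Real.sqrt (w x))⁻¹
      + g x ^ 3 * (-(deriv w x / (2 * Real.sqrt (w x)) / w x)))) = 0 := by
    rw [hIBP3, hbga, hbgb]
    ring
  -- IBP 4
  have hIBP4 : (∫ x in a..b, (deriv (deriv g) x * g x + deriv g x * deriv g x))
      = deriv g b * g b - deriv g a * g a :=
    integral_deriv_mul_eq_sub (fun x _ => hgxx x) (fun x _ => hgx x)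
      (II _ hgxxc.continuousOn) (II _ hgxc.continuousOn)
  rw [hbga, hbgb] at hIBP4
  norm_num at hIBP4
  have hI4 : ∫ x in a..b, deriv (deriv g) x * g x = -∫ x in a..b, (deriv g x)^2 := by
    have h1 := II _ (hgxxc.continuousOn.mul hgc.continuousOn)
    have h2 := II _ (hgxc.continuousOn.mul hgxc.continuousOn)
    have hsplit : (∫ x in a..b, deriv (deriv g) x * g x)
        + (∫ x in a..b, deriv g x * deriv g x) = 0 := by
      exact (integral_add h1 h2).symm.trans hIBP4
    have hcg : ∫ x in a..b, deriv g x * deriv g x = ∫ x in a..b, (deriv g x)^2 :=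
      integral_congr (fun x _ => (sq _).symm)
    linarith
  -- E2
  have hQc : ContinuousOn (fun x => 3 * g x ^ 2 * deriv g x * (Real.sqrt (w x))⁻¹
      + g x ^ 3 * (-(deriv w x / (2 * Real.sqrt (w x)) / w x))) (Icc a b) :=
    ((((continuous_const.mul (hgc.pow 2)).mul hgxc).continuousOn).mul hswinvc).add
      (((hgc.pow 3).continuousOn).mul hiswxc)
  have hE2 : ∫ x in a..b, 2 * g x * gt x
      = (4/3) * (∫ x in a..b, (3 * g x ^ 2 * deriv g x * (Real.sqrt (w x))⁻¹
          + g x ^ 3 * (-(deriv w x / (2 * Real.sqrt (w x)) / w x))))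
        + 2 * (∫ x in a..b, deriv (deriv g) x * g x)
        - (2/3) * (∫ x in a..b, g x ^ 4 / w x)
        - μ * (∫ x in a..b, f x * g x ^ 2)
        - μ * (∫ x in a..b, Real.sqrt (w x) * deriv f x * g x) := by
    have hcg : ∫ x in a..b, 2 * g x * gt x
        = ∫ x in a..b, ((4/3) * (3 * g x ^ 2 * deriv g x * (Real.sqrt (w x))⁻¹
            + g x ^ 3 * (-(deriv w x / (2 * Real.sqrt (w x)) / w x)))
          + 2 * (deriv (deriv g) x * g x)
          - (2/3) * (g x ^ 4 / w x)
          - μ * (f x * g x ^ 2)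
          - μ * (Real.sqrt (w x) * deriv f x * g x)) := by
      apply integral_congr
      intro x hx
      have hx' : x ∈ Icc a b := hIcc ▸ hx
      dsimp only
      rw [hgt x hx', (hsw x hx').deriv]
      have h1 := hwne x hx'
      have h2 := hswne x hx'
      field_simp
      ring
    have ha' : IntervalIntegrable (fun x => (4:ℝ)/3 * (3 * g x ^ 2 * deriv g x * (Real.sqrt (w x))⁻¹
        + g x ^ 3 * (-(deriv w x / (2 * Real.sqrt (w x)) / w x)))) volume a b :=
      (II _ hQc).const_mul ((4:ℝ)/3)
    have hb' : IntervalIntegrable (fun x => (2:ℝ) * (deriv (deriv g) x * g x)) volume a b :=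
      (II _ (hgxxc.continuousOn.mul hgc.continuousOn)).const_mul (2:ℝ)
    have hc' : IntervalIntegrable (fun x => (2:ℝ)/3 * (g x ^ 4 / w x)) volume a b :=
      (II _ ((((hgc.pow 4)).continuousOn).div hwc.continuousOn hwne)).const_mul ((2:ℝ)/3)
    have hd' : IntervalIntegrable (fun x => μ * (f x * g x ^ 2)) volume a b :=
      (II _ (hfc.continuousOn.mul ((hgc.pow 2)).continuousOn)).const_mul μ
    have he' : IntervalIntegrable (fun x => μ * (Real.sqrt (w x) * deriv f x * g x)) volume a b :=
      (II _ ((hswc.continuousOn.mul hfxc.continuousOn).mul hgc.continuousOn)).const_mul μ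
    rw [hcg, integral_sub (((ha'.add hb').sub hc').sub hd') he',
      integral_sub ((ha'.add hb').sub hc') hd',
      integral_sub (ha'.add hb') hc',
      integral_add ha' hb',
      intervalIntegral.integral_const_mul, intervalIntegral.integral_const_mul, intervalIntegral.integral_const_mul, intervalIntegral.integral_const_mul,
      intervalIntegral.integral_const_mul]
  rw [hE1, hE2, hQ0, hI4]
  ring

end EnergyDiss

end EnergyDissAux


/-- Energy dissipation law for the reformulated (u,v,σ) system in one dimension:
the energy E(t) = (μ/4)∫(u log u − u + 1) + (χ/2)∫σ² satisfies
E'(t) + (μ/4)∫(∂ₓu)²/u + χ∫(∂ₓσ)² + (χ/3)∫σ⁴/v + (χμ/2)∫uσ² = 0;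
in particular E is non-increasing in time. -/
theorem energy_dissipation_uvsigma_1d
    (a b T χ μ : ℝ) (hab : a < b) (hT : 0 < T) (hχ : 0 < χ) (hμ : 0 < μ)
    (u v σ : ℝ → ℝ → ℝ)
    (hu : ContDiff ℝ (⊤ : ℕ∞) (fun p : ℝ × ℝ => u p.1 p.2))
    (hv : ContDiff ℝ (⊤ : ℕ∞) (fun p : ℝ × ℝ => v p.1 p.2))
    (hσ : ContDiff ℝ (⊤ : ℕ∞) (fun p : ℝ × ℝ => σ p.1 p.2))
    (hupos : ∀ t ∈ Set.Icc (0:ℝ) T, ∀ x ∈ Set.Icc a b, 0 < u t x)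
    (hvpos : ∀ t ∈ Set.Icc (0:ℝ) T, ∀ x ∈ Set.Icc a b, 0 < v t x)
    (hpde_u : ∀ t ∈ Set.Icc (0:ℝ) T, ∀ x ∈ Set.Icc a b,
      deriv (fun s => u s x) t - deriv (deriv (u t)) x
        + 2 * χ * deriv (fun y => u t y * Real.sqrt (v t y) * σ t y) x = 0)
    (hpde_v : ∀ t ∈ Set.Icc (0:ℝ) T, ∀ x ∈ Set.Icc a b,
      deriv (fun s => v s x) t - deriv (deriv (v t)) x + μ * u t x * v t x = 0)
    (hpde_σ : ∀ t ∈ Set.Icc (0:ℝ) T, ∀ x ∈ Set.Icc a b,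
      deriv (fun s => σ s x) t
        - (2 / Real.sqrt (v t x)) * σ t x * deriv (σ t) x
        + (1 / (3 * v t x)) * (σ t x)^3
        + (2 / (3 * v t x)) * (σ t x)^2 * deriv (fun y => Real.sqrt (v t y)) x
        - deriv (deriv (σ t)) x
        + (μ/2) * u t x * σ t x
        + (μ/2) * Real.sqrt (v t x) * deriv (u t) x = 0)
    (hbc_u : ∀ t ∈ Set.Icc (0:ℝ) T, deriv (u t) a = 0 ∧ deriv (u t) b = 0)
    (hbc_v : ∀ t ∈ Set.Icc (0:ℝ) T, deriv (v t) a = 0 ∧ deriv (v t) b = 0)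
    (hbc_σ : ∀ t ∈ Set.Icc (0:ℝ) T, σ t a = 0 ∧ σ t b = 0) :
    (∀ t ∈ Set.Icc (0:ℝ) T, ∃ D : ℝ,
      HasDerivAt (fun s =>
          (μ/4) * (∫ x in a..b, (u s x * Real.log (u s x) - u s x + 1))
          + (χ/2) * ∫ x in a..b, (σ s x)^2) D t ∧
      D + (μ/4) * (∫ x in a..b, (deriv (u t) x)^2 / u t x)
        + χ * (∫ x in a..b, (deriv (σ t) x)^2)
        + (χ/3) * (∫ x in a..b, (σ t x)^4 / v t x)
        + (χ * μ / 2) * (∫ x in a..b, u t x * (σ t x)^2) = 0) ∧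
    (∀ s ∈ Set.Icc (0:ℝ) T, ∀ t ∈ Set.Icc (0:ℝ) T, s ≤ t →
      (μ/4) * (∫ x in a..b, (u t x * Real.log (u t x) - u t x + 1))
          + (χ/2) * (∫ x in a..b, (σ t x)^2)
        ≤ (μ/4) * (∫ x in a..b, (u s x * Real.log (u s x) - u s x + 1))
          + (χ/2) * ∫ x in a..b, (σ s x)^2) := by
  have hkey : ∀ t ∈ Set.Icc (0:ℝ) T, ∃ D : ℝ,
      HasDerivAt (fun s =>
          (μ/4) * (∫ x in a..b, (u s x * Real.log (u s x) - u s x + 1))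
          + (χ/2) * ∫ x in a..b, (σ s x)^2) D t ∧
      D + (μ/4) * (∫ x in a..b, (deriv (u t) x)^2 / u t x)
        + χ * (∫ x in a..b, (deriv (σ t) x)^2)
        + (χ/3) * (∫ x in a..b, (σ t x)^4 / v t x)
        + (χ * μ / 2) * (∫ x in a..b, u t x * (σ t x)^2) = 0 := by
    intro t ht
    have huc : Continuous (fun p : ℝ × ℝ => u p.1 p.2) := hu.continuous
    have hσc : Continuous (fun p : ℝ × ℝ => σ p.1 p.2) := hσ.continuous
    obtain ⟨ε, hε, htube⟩ := EnergyDiss.tube_pos huc (hupos t ht)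
    have husc : ∀ s, Continuous (u s) := fun s => (EnergyDiss.contDiff_slice2 hu s).continuous
    have hσsc : ∀ s, Continuous (σ s) := fun s => (EnergyDiss.contDiff_slice2 hσ s).continuous
    have hIcc : Set.uIcc a b = Set.Icc a b := Set.uIcc_of_le hab.le
    have hA : HasDerivAt (fun s => ∫ x in a..b, (u s x * Real.log (u s x) - u s x + 1))
        (∫ x in a..b, (fderiv ℝ (fun p : ℝ × ℝ => u p.1 p.2) (t, x) ((1:ℝ), (0:ℝ)))
          * Real.log (u t x)) t := by
      apply EnergyDiss.hasDerivAt_int (g := fun s x => u s x * Real.log (u s x) - u s x + 1)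
        (g' := fun s x => (fderiv ℝ (fun p : ℝ × ℝ => u p.1 p.2) (s, x) ((1:ℝ), (0:ℝ)))
          * Real.log (u s x)) hab.le (half_pos hε)
      · intro s
        exact ((((husc s).measurable.mul
          (Real.measurable_log.comp (husc s).measurable)).sub (husc s).measurable).add_const
            1).aestronglyMeasurable
      · apply ContinuousOn.intervalIntegrable
        rw [hIcc]
        exact (((husc t).continuousOn.mul (ContinuousOn.log (husc t).continuousOn
          (fun x hx => (hupos t ht x hx).ne'))).sub (husc t).continuousOn).add continuousOn_const
      · intro x hx s hs
        have hsball : s ∈ Metric.ball t ε := Metric.ball_subset_ball (by linarith) hs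
        have hpos : 0 < u s x := htube s hsball x hx
        have hus : HasDerivAt (fun s' => u s' x)
            (fderiv ℝ (fun p : ℝ × ℝ => u p.1 p.2) (s, x) ((1:ℝ), (0:ℝ))) s :=
          EnergyDiss.hasDerivAt_slice1 hu s x
        have h1 := ((hus.mul (hus.log hpos.ne')).sub hus).add_const (1:ℝ)
        exact h1.congr_deriv (by field_simp; ring)
      · apply ContinuousOn.mul
        · exact (EnergyDiss.continuous_pderiv1 hu).continuousOn
        · apply ContinuousOn.log
          · exact huc.continuousOn
          · rintro ⟨s, x⟩ ⟨hs, hx⟩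
            have hsball : s ∈ Metric.ball t ε := by
              rw [Real.ball_eq_Ioo]
              constructor
              · have := hs.1; simp only [Set.mem_Icc] at *; linarith [hs.1]
              · linarith [hs.2]
            exact (htube s hsball x hx).ne'
    have hB : HasDerivAt (fun s => ∫ x in a..b, (σ s x)^2)
        (∫ x in a..b, 2 * σ t x * (fderiv ℝ (fun p : ℝ × ℝ => σ p.1 p.2) (t, x)
          ((1:ℝ), (0:ℝ)))) t := by
      apply EnergyDiss.hasDerivAt_int (g := fun s x => (σ s x)^2)
        (g' := fun s x => 2 * σ s x * (fderiv ℝ (fun p : ℝ × ℝ => σ p.1 p.2) (s, x)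
          ((1:ℝ), (0:ℝ)))) hab.le one_pos
      · intro s
        exact ((hσsc s).pow 2).aestronglyMeasurable
      · apply ContinuousOn.intervalIntegrable
        exact ((hσsc t).pow 2).continuousOn
      · intro x hx s hs
        have h1 := (EnergyDiss.hasDerivAt_slice1 hσ s x).pow 2
        exact h1.congr_deriv (by norm_num)
      · exact ((continuous_const.mul hσc).mul (EnergyDiss.continuous_pderiv1 hσ)).continuousOn
    refine ⟨_, (hA.const_mul (μ/4)).add (hB.const_mul (χ/2)), ?_⟩
    have hkeyid := EnergyDiss.key_identity (χ := χ) (μ := μ) hab (u t) (v t) (σ t)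
      (fun x => fderiv ℝ (fun p : ℝ × ℝ => u p.1 p.2) (t, x) ((1:ℝ), (0:ℝ)))
      (fun x => fderiv ℝ (fun p : ℝ × ℝ => σ p.1 p.2) (t, x) ((1:ℝ), (0:ℝ)))
      (EnergyDiss.contDiff_slice2 hu t) (EnergyDiss.contDiff_slice2 hv t)
      (EnergyDiss.contDiff_slice2 hσ t)
      (hupos t ht) (hvpos t ht)
      (by
        intro x hx
        have h := hpde_u t ht x hx
        have h2 := (EnergyDiss.hasDerivAt_slice1 hu t x).deriv
        rw [← h2]
        linarith)
      (by
        intro x hx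
        have h := hpde_σ t ht x hx
        have h2 := (EnergyDiss.hasDerivAt_slice1 hσ t x).deriv
        rw [← h2]
        linarith)
      (hbc_u t ht).1 (hbc_u t ht).2 (hbc_σ t ht).1 (hbc_σ t ht).2
    exact hkeyid
  refine ⟨hkey, ?_⟩
  intro s hs t ht hst
  have hanti : AntitoneOn (fun r =>
      (μ/4) * (∫ x in a..b, (u r x * Real.log (u r x) - u r x + 1))
        + (χ/2) * ∫ x in a..b, (σ r x)^2) (Set.Icc (0:ℝ) T) := by
    apply antitoneOn_of_deriv_nonpos (convex_Icc 0 T)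
    · intro r hr
      obtain ⟨D, hD, _⟩ := hkey r hr
      exact hD.continuousAt.continuousWithinAt
    · intro r hr
      obtain ⟨D, hD, _⟩ := hkey r (interior_subset hr)
      exact hD.differentiableAt.differentiableWithinAt
    · intro r hr
      rw [interior_Icc] at hr
      have hr' : r ∈ Set.Icc (0:ℝ) T := Set.Ioo_subset_Icc_self hr
      obtain ⟨D, hD, hDeq⟩ := hkey r hr'
      rw [hD.deriv]
      have h1 : 0 ≤ ∫ x in a..b, (deriv (u r) x)^2 / u r x :=
        intervalIntegral.integral_nonneg hab.le
          (fun x hx => div_nonneg (sq_nonneg _) (hupos r hr' x hx).le)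
      have h2 : 0 ≤ ∫ x in a..b, (deriv (σ r) x)^2 :=
        intervalIntegral.integral_nonneg hab.le (fun x _ => sq_nonneg _)
      have h3 : 0 ≤ ∫ x in a..b, (σ r x)^4 / v r x :=
        intervalIntegral.integral_nonneg hab.le
          (fun x hx => div_nonneg (by positivity) (hvpos r hr' x hx).le)
      have h4 : 0 ≤ ∫ x in a..b, u r x * (σ r x)^2 :=
        intervalIntegral.integral_nonneg hab.le
          (fun x hx => mul_nonneg (hupos r hr' x hx).le (sq_nonneg _))
      have k1 : 0 ≤ (μ/4) * ∫ x in a..b, (deriv (u r) x)^2 / u r x :=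
        mul_nonneg (by positivity) h1
      have k2 : 0 ≤ χ * ∫ x in a..b, (deriv (σ r) x)^2 := mul_nonneg hχ.le h2
      have k3 : 0 ≤ (χ/3) * ∫ x in a..b, (σ r x)^4 / v r x := mul_nonneg (by positivity) h3
      have k4 : 0 ≤ (χ * μ / 2) * ∫ x in a..b, u r x * (σ r x)^2 :=
        mul_nonneg (by positivity) h4
      linarith
  exact hanti hs ht hst
end

section
/- Properties of the regularized entropy potential F_ε: F_ε is twice continuously differentiable on ℝ with F_ε''(s) ≥ 0 for all s (convexity), F_ε' is non-decreasing on ℝ; F_ε(s) ≥ 0 for all s ∈ ℝ; and F_ε(s) ≥ s²/(2ε) for every s ≤ 0. (The last inequality yields the approximate-positivity estimate with rate O(√ε) in L² for the negative part.) -/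
/-!
`Feps ε` glues two quadratics to `s log s - s + 1` at `ε` and `1/ε` with matching values and
slopes, so its derivative is the logarithm continued linearly outside `[ε, 1/ε]`; that function
is glued in the same way, with derivative `1 / a_ε`, which is continuous and positive. Hence
`Feps ε` is `C²` and convex, so it is minimal at `s = 1`, where it vanishes together with its
derivative. For `s ≤ 0` the gap `Feps ε s - s² / (2ε) = (1 - log ε) (-s) + 1 - ε / 2` is
nonnegative because `log ε ≤ 0`.
-/

/-- The C² regularization `F_ε` of the entropy potential `F(s) = s log s − s + 1`. -/
noncomputable def Feps (ε : ℝ) (s : ℝ) : ℝ :=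
  if s ≤ ε then
    ε * Real.log ε - ε + 1 + Real.log ε * (s - ε) + (s - ε)^2/(2*ε)
  else if s ≤ 1/ε then
    s * Real.log s - s + 1
  else
    (1/ε) * Real.log (1/ε) - 1/ε + 1 + Real.log (1/ε) * (s - 1/ε) + ε*(s - 1/ε)^2/2

open Set Real

theorem hasDerivAt_ite_le {f g f' g' : ℝ → ℝ} {a x : ℝ}
    (hf : x ≤ a → HasDerivAt f (f' x) x) (hg : a ≤ x → HasDerivAt g (g' x) x)
    (hfg : f a = g a) (hfg' : f' a = g' a) :
    HasDerivAt (fun y ↦ if y ≤ a then f y else g y) (if x ≤ a then f' x else g' x) x := by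
  rcases lt_trichotomy x a with hxa | rfl | hax
  · rw [if_pos hxa.le]
    refine (hf hxa.le).congr_of_eventuallyEq ?_
    filter_upwards [Iio_mem_nhds hxa] with y hy using if_pos hy.le
  · rw [if_pos le_rfl]
    have hleft : HasDerivWithinAt (fun y ↦ if y ≤ x then f y else g y) (f' x) (Iic x) x :=
      (hf le_rfl).hasDerivWithinAt.congr (fun y hy ↦ if_pos hy) (if_pos le_rfl)
    have hright : HasDerivWithinAt (fun y ↦ if y ≤ x then f y else g y) (f' x) (Ici x) x := by
      refine hfg' ▸ (hg le_rfl).hasDerivWithinAt.congr (fun y hy ↦ ?_) (by simp [hfg])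
      rcases (mem_Ici.1 hy).eq_or_lt with rfl | hxy
      · simp [hfg]
      · simp [hxy]
    simpa [Iic_union_Ici] using hleft.union hright
  · rw [if_neg hax.not_ge]
    refine (hg hax.le).congr_of_eventuallyEq ?_
    filter_upwards [Ioi_mem_nhds hax] with y hy using if_neg (not_le.2 hy)

theorem Monotone.isMinOn_univ_of_deriv_eq_zero {f : ℝ → ℝ} (hf' : Monotone (deriv f))
    (hf : Differentiable ℝ f) {c : ℝ} (hc : deriv f c = 0) : IsMinOn f univ c :=
  isMinOn_univ_of_deriv hf.continuous.continuousAt hf.differentiableOn hf.differentiableOn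
    (fun _ hs ↦ hc ▸ hf' (le_of_lt hs)) (fun _ hs ↦ hc ▸ hf' (le_of_lt hs))

/-- The derivative of `Feps ε`: the logarithm on `[ε, 1/ε]`, continued by its tangent lines. -/
noncomputable def logEps (ε s : ℝ) : ℝ :=
  if s ≤ ε then log ε + (s - ε) / ε
  else if s ≤ 1 / ε then log s
  else log (1 / ε) + ε * (s - 1 / ε)

/-- The weight `a_ε` of the regularization, with `Feps ε'' = 1 / a_ε`. -/
noncomputable def mobility (ε s : ℝ) : ℝ := max ε (min s (1 / ε))

section
variable {ε : ℝ}

lemma le_one_div_self (hε0 : 0 < ε) (hε1 : ε ≤ 1) : ε ≤ 1 / ε :=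
  hε1.trans (one_le_one_div hε0 hε1)

theorem hasDerivAt_Feps (hε0 : 0 < ε) (hε1 : ε ≤ 1) (s : ℝ) :
    HasDerivAt (Feps ε) (logEps ε s) s := by
  have hε := le_one_div_self hε0 hε1
  refine hasDerivAt_ite_le (f' := fun s ↦ log ε + (s - ε) / ε)
    (g' := fun s ↦ if s ≤ 1 / ε then log s else log (1 / ε) + ε * (s - 1 / ε))
    (fun _ ↦ ?_) (fun hs ↦ ?_) ?_ ?_
  · have hy := (hasDerivAt_id' s).sub_const ε
    refine (((hy.const_mul (log ε)).const_add (ε * log ε - ε + 1)).fun_add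
      ((hy.fun_pow 2).div_const (2 * ε))).congr_deriv ?_
    field_simp
    ring
  · refine hasDerivAt_ite_le (f' := log) (g' := fun s ↦ log (1 / ε) + ε * (s - 1 / ε))
      (fun _ ↦ ?_) (fun _ ↦ ?_) ?_ ?_
    · have hs0 : 0 < s := hε0.trans_le hs
      refine ((((hasDerivAt_id' s).fun_mul (hasDerivAt_log hs0.ne')).fun_sub
        (hasDerivAt_id' s)).add_const 1).congr_deriv ?_
      field_simp
      ring
    · have hy := (hasDerivAt_id' s).sub_const (1 / ε)
      refine (((hy.const_mul (log (1 / ε))).const_add (1 / ε * log (1 / ε) - 1 / ε + 1)).fun_add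
        (((hy.fun_pow 2).const_mul ε).div_const 2)).congr_deriv ?_
      ring
    · ring
    · ring
  · simp only [if_pos hε]; ring
  · simp only [if_pos hε, sub_self, zero_div, add_zero]

lemma inv_mobility_eq (hε0 : 0 < ε) (hε1 : ε ≤ 1) (s : ℝ) :
    (mobility ε s)⁻¹ = if s ≤ ε then ε⁻¹ else if s ≤ 1 / ε then s⁻¹ else ε := by
  have hε := le_one_div_self hε0 hε1
  unfold mobility
  split_ifs with hsε hs
  · rw [min_eq_left (hsε.trans hε), max_eq_left hsε]
  · rw [min_eq_left hs, max_eq_right (not_le.1 hsε).le]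
  · rw [min_eq_right (not_le.1 hs).le, max_eq_right hε, one_div, inv_inv]

lemma mobility_pos (hε0 : 0 < ε) (s : ℝ) : 0 < mobility ε s :=
  hε0.trans_le (le_max_left _ _)

theorem hasDerivAt_logEps (hε0 : 0 < ε) (hε1 : ε ≤ 1) (s : ℝ) :
    HasDerivAt (logEps ε) (mobility ε s)⁻¹ s := by
  have hε := le_one_div_self hε0 hε1
  rw [inv_mobility_eq hε0 hε1]
  refine hasDerivAt_ite_le (f' := fun _ ↦ ε⁻¹)
    (g' := fun s ↦ if s ≤ 1 / ε then s⁻¹ else ε) (fun _ ↦ ?_) (fun hs ↦ ?_) ?_ ?_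
  · simpa using (((hasDerivAt_id' s).sub_const ε).div_const ε).const_add (log ε)
  · refine hasDerivAt_ite_le (f' := fun s ↦ s⁻¹) (g' := fun _ ↦ ε) (fun _ ↦ ?_) (fun _ ↦ ?_) ?_ ?_
    · exact hasDerivAt_log (hε0.trans_le hs).ne'
    · simpa using (((hasDerivAt_id' s).sub_const (1 / ε)).const_mul ε).const_add (log (1 / ε))
    · ring
    · simp
  · simp only [if_pos hε]; ring
  · exact (if_pos hε).symm

theorem differentiable_Feps (hε0 : 0 < ε) (hε1 : ε ≤ 1) : Differentiable ℝ (Feps ε) :=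
  fun s ↦ (hasDerivAt_Feps hε0 hε1 s).differentiableAt

theorem differentiable_logEps (hε0 : 0 < ε) (hε1 : ε ≤ 1) : Differentiable ℝ (logEps ε) :=
  fun s ↦ (hasDerivAt_logEps hε0 hε1 s).differentiableAt

theorem deriv_Feps (hε0 : 0 < ε) (hε1 : ε ≤ 1) : deriv (Feps ε) = logEps ε :=
  funext fun s ↦ (hasDerivAt_Feps hε0 hε1 s).deriv

theorem deriv_logEps (hε0 : 0 < ε) (hε1 : ε ≤ 1) : deriv (logEps ε) = fun s ↦ (mobility ε s)⁻¹ :=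
  funext fun s ↦ (hasDerivAt_logEps hε0 hε1 s).deriv

theorem continuous_inv_mobility (hε0 : 0 < ε) : Continuous fun s ↦ (mobility ε s)⁻¹ :=
  (continuous_const.max (continuous_id.min continuous_const)).inv₀ fun s ↦ (mobility_pos hε0 s).ne'

theorem monotone_logEps (hε0 : 0 < ε) (hε1 : ε ≤ 1) : Monotone (logEps ε) :=
  monotone_of_deriv_nonneg (differentiable_logEps hε0 hε1)
    fun s ↦ by rw [deriv_logEps hε0 hε1]; exact (inv_pos.2 (mobility_pos hε0 s)).le

theorem contDiff_two_Feps (hε0 : 0 < ε) (hε1 : ε ≤ 1) : ContDiff ℝ 2 (Feps ε) := by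
  refine (contDiff_succ_iff_deriv (n := 1)).2 ⟨differentiable_Feps hε0 hε1, by simp, ?_⟩
  rw [deriv_Feps hε0 hε1, contDiff_one_iff_deriv, deriv_logEps hε0 hε1]
  exact ⟨differentiable_logEps hε0 hε1, continuous_inv_mobility hε0⟩

lemma logEps_one (hε0 : 0 < ε) (hε1 : ε ≤ 1) : logEps ε 1 = 0 := by
  unfold logEps
  split_ifs with h h'
  · simp [le_antisymm hε1 h]
  · simp
  · exact absurd (one_le_one_div hε0 hε1) h'

lemma Feps_one (hε0 : 0 < ε) (hε1 : ε ≤ 1) : Feps ε 1 = 0 := by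
  unfold Feps
  split_ifs with h h'
  · simp [le_antisymm hε1 h]
  · simp
  · exact absurd (one_le_one_div hε0 hε1) h'

theorem Feps_nonneg (hε0 : 0 < ε) (hε1 : ε ≤ 1) (s : ℝ) : 0 ≤ Feps ε s := by
  have hmono : Monotone (deriv (Feps ε)) := deriv_Feps hε0 hε1 ▸ monotone_logEps hε0 hε1
  have hmin := hmono.isMinOn_univ_of_deriv_eq_zero (differentiable_Feps hε0 hε1)
    (by rw [deriv_Feps hε0 hε1, logEps_one hε0 hε1])
  simpa [Feps_one hε0 hε1] using hmin (mem_univ s)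

theorem sq_div_le_Feps_of_nonpos (hε0 : 0 < ε) (hε1 : ε ≤ 1) {s : ℝ} (hs : s ≤ 0) :
    s ^ 2 / (2 * ε) ≤ Feps ε s := by
  rw [Feps, if_pos (hs.trans hε0.le)]
  have hlog : log ε ≤ 0 := log_nonpos hε0.le hε1
  have key : ε * log ε - ε + 1 + log ε * (s - ε) + (s - ε) ^ 2 / (2 * ε) - s ^ 2 / (2 * ε)
      = (1 - log ε) * -s + (1 - ε / 2) := by
    field_simp
    ring
  linarith [mul_nonneg (by linarith : 0 ≤ 1 - log ε) (neg_nonneg.2 hs)]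

end

/-- Properties of the regularized entropy potential `F_ε`: it is twice
continuously differentiable with `F_ε'' ≥ 0` (convexity), `F_ε'` is
non-decreasing, `F_ε` is nonnegative, and `F_ε(s) ≥ s²/(2ε)` for `s ≤ 0`. -/
theorem Feps_properties (ε : ℝ) (hε0 : 0 < ε) (hε1 : ε ≤ 1) :
    ContDiff ℝ 2 (Feps ε) ∧
    (∀ s : ℝ, 0 ≤ deriv (deriv (Feps ε)) s) ∧
    Monotone (deriv (Feps ε)) ∧
    (∀ s : ℝ, 0 ≤ Feps ε s) ∧
    (∀ s : ℝ, s ≤ 0 → s^2/(2*ε) ≤ Feps ε s) := by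
  rw [deriv_Feps hε0 hε1, deriv_logEps hε0 hε1]
  exact ⟨contDiff_two_Feps hε0 hε1, fun s ↦ (inv_pos.2 (mobility_pos hε0 s)).le,
    monotone_logEps hε0 hε1, Feps_nonneg hε0 hε1, fun _ ↦ sq_div_le_Feps_of_nonpos hε0 hε1⟩
end

section
/- Integrated weak estimate for v: if in addition u(t,x) ≥ 0 for all (t,x) ∈ [0,T] × [a,b], then ∫ₐᵇ v(T,x)² dx + ∫₀ᵀ ∫ₐᵇ (∂ₓv(t,x))² dx dt ≤ ∫ₐᵇ v(0,x)² dx; in particular the space–time integral of (∂ₓv)² is bounded by the squared L²-norm of the initial datum v(0,·), uniformly in T. -/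
open MeasureTheory

/-- Integrated weak estimate for v: if u ≥ 0, then
∫ₐᵇ v(T,x)² dx + ∫₀ᵀ∫ₐᵇ (∂ₓv)² dx dt ≤ ∫ₐᵇ v(0,x)² dx. -/
theorem integrated_weak_estimate_v
    (a b T χ μ : ℝ) (hab : a < b) (hT : 0 < T) (hχ : 0 < χ) (hμ : 0 < μ)
    (u v : ℝ → ℝ → ℝ)
    (hu : ContDiff ℝ (⊤ : ℕ∞) (fun p : ℝ × ℝ => u p.1 p.2))
    (hv : ContDiff ℝ (⊤ : ℕ∞) (fun p : ℝ × ℝ => v p.1 p.2))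
    (hpde_u : ∀ t ∈ Set.Icc (0:ℝ) T, ∀ x ∈ Set.Icc a b,
      deriv (fun s => u s x) t
        = deriv (deriv (u t)) x - χ * deriv (fun y => u t y * deriv (v t) y) x)
    (hpde_v : ∀ t ∈ Set.Icc (0:ℝ) T, ∀ x ∈ Set.Icc a b,
      deriv (fun s => v s x) t
        = deriv (deriv (v t)) x - μ * u t x * v t x)
    (hbc_u : ∀ t ∈ Set.Icc (0:ℝ) T, deriv (u t) a = 0 ∧ deriv (u t) b = 0)
    (hbc_v : ∀ t ∈ Set.Icc (0:ℝ) T, deriv (v t) a = 0 ∧ deriv (v t) b = 0)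
    (hupos : ∀ t ∈ Set.Icc (0:ℝ) T, ∀ x ∈ Set.Icc a b, 0 ≤ u t x) :
    (∫ x in a..b, (v T x)^2)
      + (∫ t in (0:ℝ)..T, ∫ x in a..b, (deriv (v t) x)^2)
      ≤ ∫ x in a..b, (v 0 x)^2 := by
  set V : ℝ × ℝ → ℝ := fun p => v p.1 p.2 with hV
  -- smoothness in x for fixed t
  have hvx : ∀ t : ℝ, ContDiff ℝ (⊤ : ℕ∞) (v t) := fun t =>
    hv.comp (contDiff_const.prodMk contDiff_id)
  have hux : ∀ t : ℝ, ContDiff ℝ (⊤ : ℕ∞) (u t) := fun t =>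
    hu.comp (contDiff_const.prodMk contDiff_id)
  -- continuity of fderiv
  have hfd : Continuous (fun p : ℝ × ℝ => fderiv ℝ V p) :=
    hv.continuous_fderiv (by simp)
  have hVdiff : Differentiable ℝ V := hv.differentiable (by simp)
  -- time derivative
  set dVt : ℝ → ℝ → ℝ := fun t x => fderiv ℝ V (t, x) (1, 0) with hdVt
  have hV1 : ∀ t x : ℝ, HasDerivAt (fun s => v s x) (dVt t x) t := by
    intro t x
    have h1 : HasDerivAt (fun s : ℝ => (s, x)) ((1:ℝ), (0:ℝ)) t := by
      simpa using ((hasDerivAt_id t).prodMk (hasDerivAt_const t x))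
    exact (hVdiff (t, x)).hasFDerivAt.comp_hasDerivAt t h1
  have hdVt_cont : Continuous (fun p : ℝ × ℝ => dVt p.1 p.2) := by
    exact (ContinuousLinearMap.apply ℝ ℝ ((1:ℝ), (0:ℝ))).continuous.comp hfd
  -- E and F and G
  set E : ℝ → ℝ := fun t => ∫ x in a..b, (v t x)^2 with hE
  set F : ℝ → ℝ := fun t => ∫ x in a..b, (deriv (v t) x)^2 with hF
  set G : ℝ → ℝ := fun t => ∫ x in a..b, 2 * v t x * dVt t x with hG
  have hVcont : Continuous V := hv.continuous
  have hvcontx : ∀ t, Continuous (v t) := fun t => (hvx t).continuous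
  -- derivative of E
  have hEderiv : ∀ t : ℝ, HasDerivAt E (G t) t := by
    intro t₀
    have hK : IsCompact ((Set.Icc (t₀-1) (t₀+1)) ×ˢ (Set.Icc a b)) :=
      isCompact_Icc.prod isCompact_Icc
    have hfc : Continuous (fun p : ℝ × ℝ => 2 * v p.1 p.2 * dVt p.1 p.2) :=
      ((continuous_const.mul hVcont).mul hdVt_cont)
    obtain ⟨C, hC⟩ := hK.exists_bound_of_continuousOn hfc.continuousOn
    have key := intervalIntegral.hasDerivAt_integral_of_dominated_loc_of_deriv_le
      (F := fun s x => (v s x)^2) (F' := fun s x => 2 * v s x * dVt s x)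
      (x₀ := t₀) (bound := fun _ => C) (a := a) (b := b) (μ := volume)
      (Metric.ball_mem_nhds t₀ one_pos)
      (Filter.Eventually.of_forall fun s =>
        (((hvcontx s).pow 2).aestronglyMeasurable))
      (((hvcontx t₀).pow 2).intervalIntegrable a b)
      ((continuous_const.mul (hvcontx t₀)).mul
        (hdVt_cont.comp (Continuous.prodMk_right t₀))).aestronglyMeasurable
      ?_ (intervalIntegrable_const) ?_
    · exact key.2
    · refine Filter.Eventually.of_forall fun x hx s hs => ?_
      have hx' : x ∈ Set.Icc a b := by
        rw [Set.uIoc_of_le hab.le] at hx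
        exact Set.Ioc_subset_Icc_self hx
      have hs' : s ∈ Set.Icc (t₀-1) (t₀+1) := by
        rw [Real.ball_eq_Ioo] at hs
        exact Set.Ioo_subset_Icc_self hs
      exact hC (s, x) (Set.mk_mem_prod hs' hx')
    · refine Filter.Eventually.of_forall fun x _ s _ => ?_
      simpa [mul_assoc] using (hV1 s x).fun_pow 2
  -- FTC for E
  have hGcont : Continuous G := by
    apply intervalIntegral.continuous_parametric_intervalIntegral_of_continuous'
    exact (continuous_const.mul hVcont).mul hdVt_cont
  have hFTC : ∫ t in (0:ℝ)..T, G t = E T - E 0 :=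
    intervalIntegral.integral_eq_sub_of_hasDerivAt (fun t _ => hEderiv t)
      (hGcont.intervalIntegrable 0 T)
  -- space derivatives
  have hv1 : ∀ t, Differentiable ℝ (v t) := fun t => (hvx t).differentiable (by simp)
  have hvx' : ∀ t, ContDiff ℝ ((⊤ : ℕ∞) : WithTop ℕ∞) (deriv (v t)) := fun t =>
    (contDiff_infty_iff_deriv.mp ((hvx t).of_le (by simp))).2
  have hv2 : ∀ t, Differentiable ℝ (deriv (v t)) := fun t =>
    (hvx' t).differentiable (by simp)
  have hdv_cont : Continuous (fun p : ℝ × ℝ => deriv (v p.1) p.2) := by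
    have : ∀ p : ℝ × ℝ, deriv (v p.1) p.2 = fderiv ℝ V p (0, 1) := by
      intro p
      have h1 : HasDerivAt (fun y : ℝ => (p.1, y)) ((0:ℝ), (1:ℝ)) p.2 := by
        simpa using ((hasDerivAt_const p.2 p.1).prodMk (hasDerivAt_id p.2))
      exact ((hVdiff p).hasFDerivAt.comp_hasDerivAt p.2 h1).deriv
    rw [show (fun p : ℝ × ℝ => deriv (v p.1) p.2)
        = fun p : ℝ × ℝ => fderiv ℝ V p (0, 1) from funext this]
    exact (ContinuousLinearMap.apply ℝ ℝ ((0:ℝ), (1:ℝ))).continuous.comp hfd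
  -- pointwise bound G t ≤ -F t on [0, T]
  have hGF : ∀ t ∈ Set.Icc (0:ℝ) T, G t ≤ -F t := by
    intro t ht
    -- integration by parts
    have hIBP : ∫ x in a..b, v t x * deriv (deriv (v t)) x
        = - ∫ x in a..b, deriv (v t) x * deriv (v t) x := by
      have := intervalIntegral.integral_mul_deriv_eq_deriv_mul
        (u := v t) (v := deriv (v t)) (u' := deriv (v t)) (v' := deriv (deriv (v t)))
        (a := a) (b := b)
        (fun x _ => (hv1 t x).hasDerivAt)
        (fun x _ => (hv2 t x).hasDerivAt)
        ((hvx' t).continuous.intervalIntegrable a b)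
        (((contDiff_infty_iff_deriv.mp (hvx' t)).2).continuous.intervalIntegrable a b)
      rw [(hbc_v t ht).1, (hbc_v t ht).2] at this
      simpa using this
    -- rewrite G t using PDE
    have hGt : G t = 2 * (∫ x in a..b, v t x * deriv (deriv (v t)) x)
        - 2 * μ * ∫ x in a..b, u t x * (v t x)^2 := by
      have h1 : ∀ x ∈ Set.uIcc a b,
          2 * v t x * dVt t x
            = 2 * (v t x * deriv (deriv (v t)) x) - 2 * μ * (u t x * (v t x)^2) := by
        intro x hx
        have hx' : x ∈ Set.Icc a b := by rwa [Set.uIcc_of_le hab.le] at hx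
        have : dVt t x = deriv (deriv (v t)) x - μ * u t x * v t x := by
          rw [← (hV1 t x).deriv]; exact hpde_v t ht x hx'
        rw [this]; ring
      calc G t = ∫ x in a..b,
            (2 * (v t x * deriv (deriv (v t)) x) - 2 * μ * (u t x * (v t x)^2)) :=
          intervalIntegral.integral_congr h1
        _ = 2 * (∫ x in a..b, v t x * deriv (deriv (v t)) x)
            - 2 * μ * ∫ x in a..b, u t x * (v t x)^2 := by
          rw [intervalIntegral.integral_sub, intervalIntegral.integral_const_mul,
            intervalIntegral.integral_const_mul]
          · exact (continuous_const.mul ((hvcontx t).mul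
              (contDiff_infty_iff_deriv.mp (hvx' t)).2.continuous)).intervalIntegrable a b
          · exact (continuous_const.mul ((hux t).continuous.mul
              ((hvcontx t).pow 2))).intervalIntegrable a b
    have hnn : 0 ≤ ∫ x in a..b, u t x * (v t x)^2 := by
      apply intervalIntegral.integral_nonneg hab.le
      intro x hx
      exact mul_nonneg (hupos t ht x hx) (sq_nonneg _)
    have hFnn : 0 ≤ F t := by
      apply intervalIntegral.integral_nonneg hab.le
      intro x _; exact sq_nonneg _
    have hFt : ∫ x in a..b, deriv (v t) x * deriv (v t) x = F t := by
      simp only [hF]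
      congr 1; funext x; ring
    have : G t = -2 * F t - 2 * μ * ∫ x in a..b, u t x * (v t x)^2 := by
      rw [hGt, hIBP, hFt]; ring
    rw [this]
    nlinarith [hμ.le]
  -- continuity of F
  have hFcont : Continuous F := by
    have : F = fun t => ∫ x in a..b, (fun t x => (deriv (v t) x)^2) t x := rfl
    rw [this]
    apply intervalIntegral.continuous_parametric_intervalIntegral_of_continuous'
    exact hdv_cont.pow 2
  -- final comparison
  have hmono : ∫ t in (0:ℝ)..T, G t ≤ ∫ t in (0:ℝ)..T, -F t := by
    apply intervalIntegral.integral_mono_on hT.le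
      (hGcont.intervalIntegrable 0 T) ((hFcont.neg).intervalIntegrable 0 T) hGF
  have : E T - E 0 ≤ - ∫ t in (0:ℝ)..T, F t := by
    rw [← hFTC]
    simpa [intervalIntegral.integral_neg] using hmono
  have hEq : (∫ t in (0:ℝ)..T, ∫ x in a..b, (deriv (v t) x)^2) = ∫ t in (0:ℝ)..T, F t := rfl
  rw [hEq]
  show E T + _ ≤ E 0
  linarith
end
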